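/- arXiv:1007.5507 — 7 statements merged into one kernel-verified Lean document; each statement's English description precedes it below -/
import Mathlib

section
/- For every $r>0$, $\varepsilon>0$ and $0<\beta<2$, the quantity $f^{\varepsilon}(r) = \frac{1}{4\varepsilon^2}\big(2r^{\beta} - |r-2\varepsilon|^{\beta} - (r+2\varepsilon)^{\beta}\big)$ satisfies $|f^{\varepsilon}(r)| \le 64\, r^{\beta-2}$. -/
/-!
Put `h = 2ε`. For `h ≤ r / 2`, the mean value theorem applied twice bounds the second difference
`(r + h) ^ β + (r - h) ^ β - 2 r ^ β` by `2 K h ^ 2`, where `K = 2 (r - h) ^ (β - 2)` is a Lipschitz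
constant of `x ↦ β x ^ (β - 1)` on `[r - h, r + h]`; as `β ≤ 2`, `(r - h) ^ (β - 2) ≤ 4 r ^ (β - 2)`.
For `h ≥ r / 2` the three terms are separately at most `9 h ^ β = 9 h ^ (β - 2) h ^ 2`, and again
`h ^ (β - 2) ≤ 4 r ^ (β - 2)`.
-/

open Real Set

lemma Convex.abs_sub_le_of_abs_hasDerivAt_le {f f' : ℝ → ℝ} {s : Set ℝ} {C x y : ℝ}
    (hs : Convex ℝ s) (hf : ∀ z ∈ s, HasDerivAt f (f' z) z) (hC : ∀ z ∈ s, |f' z| ≤ C)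
    (hx : x ∈ s) (hy : y ∈ s) : |f y - f x| ≤ C * |y - x| := by
  simpa only [Real.norm_eq_abs] using hs.norm_image_sub_le_of_norm_hasDerivWithin_le
    (fun z hz => (hf z hz).hasDerivWithinAt) (by simpa only [Real.norm_eq_abs] using hC) hx hy

lemma abs_add_add_sub_two_mul_le {f f' : ℝ → ℝ} {x h K : ℝ} (hh : 0 ≤ h) (hK : 0 ≤ K)
    (hf : ∀ y ∈ Icc (x - h) (x + h), HasDerivAt f (f' y) y)
    (hf' : ∀ y ∈ Icc (x - h) (x + h), ∀ z ∈ Icc (x - h) (x + h), |f' y - f' z| ≤ K * |y - z|) :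
    |f (x + h) + f (x - h) - 2 * f x| ≤ 2 * K * h ^ 2 := by
  have mem {t} (ht : t ∈ Icc 0 h) : x + t ∈ Icc (x - h) (x + h) ∧ x - t ∈ Icc (x - h) (x + h) :=
    ⟨⟨by linarith [ht.1], by linarith [ht.2]⟩, ⟨by linarith [ht.2], by linarith [ht.1]⟩⟩
  have hderiv : ∀ t ∈ Icc 0 h,
      HasDerivAt (fun t => f (x + t) + f (x - t)) (f' (x + t) - f' (x - t)) t := by
    intro t ht
    have hp := (hf _ (mem ht).1).comp t ((hasDerivAt_id t).const_add x)
    have hm := (hf _ (mem ht).2).comp t ((hasDerivAt_id t).const_sub x)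
    exact (hp.add hm).congr_deriv (by ring)
  have hbound : ∀ t ∈ Icc 0 h, |f' (x + t) - f' (x - t)| ≤ 2 * K * h := by
    intro t ht
    calc |f' (x + t) - f' (x - t)| ≤ K * |x + t - (x - t)| := hf' _ (mem ht).1 _ (mem ht).2
      _ = K * (2 * t) := by rw [abs_of_nonneg (by linarith [ht.1])]; ring
      _ ≤ 2 * K * h := by nlinarith [ht.2]
  have := (convex_Icc 0 h).abs_sub_le_of_abs_hasDerivAt_le hderiv hbound
    (left_mem_Icc.2 hh) (right_mem_Icc.2 hh)
  simp only [add_zero, sub_zero, abs_of_nonneg hh] at this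
  calc |f (x + h) + f (x - h) - 2 * f x| = |f (x + h) + f (x - h) - (f x + f x)| := by ring_nf
    _ ≤ 2 * K * h * h := this
    _ = 2 * K * h ^ 2 := by ring

lemma rpow_sub_two_le_four_mul {r x β : ℝ} (hr : 0 < r) (hx : r / 2 ≤ x) (hβ0 : 0 ≤ β)
    (hβ2 : β ≤ 2) : x ^ (β - 2) ≤ 4 * r ^ (β - 2) := by
  have h2 : (2 : ℝ) ^ (2 - β) ≤ 4 := by
    calc (2 : ℝ) ^ (2 - β) ≤ 2 ^ (2 : ℝ) := rpow_le_rpow_of_exponent_le one_le_two (by linarith)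
      _ = 4 := by norm_num
  calc x ^ (β - 2) ≤ (r / 2) ^ (β - 2) := rpow_le_rpow_of_nonpos (by positivity) hx (by linarith)
    _ = 2 ^ (2 - β) * r ^ (β - 2) := by
      rw [div_rpow hr.le zero_le_two, div_eq_mul_inv, ← rpow_neg zero_le_two, neg_sub, mul_comm]
    _ ≤ 4 * r ^ (β - 2) := by gcongr

lemma abs_deriv_rpow_sub_le {a x y β : ℝ} (ha : 0 < a) (hx : a ≤ x) (hy : a ≤ y)
    (hβ0 : 0 ≤ β) (hβ2 : β ≤ 2) :
    |β * x ^ (β - 1) - β * y ^ (β - 1)| ≤ 2 * a ^ (β - 2) * |x - y| := by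
  refine (convex_Ici a).abs_sub_le_of_abs_hasDerivAt_le (f := fun z => β * z ^ (β - 1))
    (f' := fun z => β * ((β - 1) * z ^ (β - 2))) (fun z hz => ?_) (fun z hz => ?_) hy hx
  · have := (hasDerivAt_rpow_const (p := β - 1) (Or.inl (ha.trans_le hz).ne')).const_mul β
    rwa [show β - 1 - 1 = β - 2 by ring] at this
  · have hz0 : 0 ≤ z ^ (β - 2) := rpow_nonneg (ha.le.trans hz) _
    have hβ : β * |β - 1| ≤ 2 := by
      rcases abs_cases (β - 1) with ⟨h, _⟩ | ⟨h, _⟩ <;> rw [h] <;> nlinarith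
    calc |β * ((β - 1) * z ^ (β - 2))| = β * |β - 1| * z ^ (β - 2) := by
          rw [abs_mul, abs_mul, abs_of_nonneg hβ0, abs_of_nonneg hz0, mul_assoc]
      _ ≤ 2 * a ^ (β - 2) :=
          mul_le_mul hβ (rpow_le_rpow_of_nonpos ha hz (by linarith)) hz0 zero_le_two

lemma abs_rpow_second_difference_le_of_le_half {r h β : ℝ} (hr : 0 < r) (hh : 0 ≤ h)
    (hhr : h ≤ r / 2) (hβ0 : 0 ≤ β) (hβ2 : β ≤ 2) :
    |2 * r ^ β - |r - h| ^ β - (r + h) ^ β| ≤ 16 * r ^ (β - 2) * h ^ 2 := by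
  have ha : 0 < r - h := by linarith
  have hlip := abs_add_add_sub_two_mul_le (f := fun x => x ^ β) (x := r) hh (by positivity)
    (fun y hy => hasDerivAt_rpow_const (Or.inl (ha.trans_le hy.1).ne'))
    (fun y hy z hz => abs_deriv_rpow_sub_le ha hy.1 hz.1 hβ0 hβ2)
  have hK := rpow_sub_two_le_four_mul hr (x := r - h) (by linarith) hβ0 hβ2
  rw [abs_of_pos ha, ← abs_neg]
  calc |-(2 * r ^ β - (r - h) ^ β - (r + h) ^ β)| = |(r + h) ^ β + (r - h) ^ β - 2 * r ^ β| := by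
        ring_nf
    _ ≤ 2 * (2 * (r - h) ^ (β - 2)) * h ^ 2 := hlip
    _ ≤ 16 * r ^ (β - 2) * h ^ 2 := by nlinarith [sq_nonneg h]

lemma rpow_le_sq_mul_rpow {x c h β : ℝ} (hx : 0 ≤ x) (hc : 1 ≤ c) (hh : 0 ≤ h) (hxc : x ≤ c * h)
    (hβ0 : 0 ≤ β) (hβ2 : β ≤ 2) : x ^ β ≤ c ^ 2 * h ^ β := by
  calc x ^ β ≤ (c * h) ^ β := rpow_le_rpow hx hxc hβ0
    _ = c ^ β * h ^ β := mul_rpow (by linarith) hh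
    _ ≤ c ^ (2 : ℝ) * h ^ β := by gcongr
    _ = c ^ 2 * h ^ β := by rw [rpow_two]

lemma abs_rpow_second_difference_le_of_half_le {r h β : ℝ} (hr : 0 < r) (hhr : r / 2 ≤ h)
    (hβ0 : 0 ≤ β) (hβ2 : β ≤ 2) :
    |2 * r ^ β - |r - h| ^ β - (r + h) ^ β| ≤ 40 * r ^ (β - 2) * h ^ 2 := by
  have hh : 0 < h := by linarith
  have b1 := rpow_le_sq_mul_rpow (c := 2) hr.le one_le_two hh.le (by linarith) hβ0 hβ2
  have b2 := rpow_le_sq_mul_rpow (c := 1) (abs_nonneg (r - h)) le_rfl hh.le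
    (by rw [one_mul, abs_le]; constructor <;> linarith) hβ0 hβ2
  have b3 := rpow_le_sq_mul_rpow (x := r + h) (c := 3) (by linarith) (by norm_num) hh.le
    (by linarith) hβ0 hβ2
  have hN : |2 * r ^ β - |r - h| ^ β - (r + h) ^ β| ≤ 10 * h ^ β := by
    have := rpow_nonneg (abs_nonneg (r - h)) β
    have := rpow_nonneg hr.le β
    have := rpow_nonneg (by linarith : 0 ≤ r + h) β
    rw [abs_le]; constructor <;> nlinarith
  have hhβ : h ^ β = h ^ (β - 2) * h ^ 2 := by
    rw [rpow_sub hh, rpow_two, div_mul_cancel₀ _ (by positivity)]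
  have := rpow_sub_two_le_four_mul hr hhr hβ0 hβ2
  calc _ ≤ 10 * h ^ β := hN
    _ = 10 * h ^ (β - 2) * h ^ 2 := by rw [hhβ]; ring
    _ ≤ 40 * r ^ (β - 2) * h ^ 2 := by nlinarith [sq_nonneg h]

lemma abs_rpow_second_difference_le {r h β : ℝ} (hr : 0 < r) (hh : 0 ≤ h) (hβ0 : 0 ≤ β)
    (hβ2 : β ≤ 2) : |2 * r ^ β - |r - h| ^ β - (r + h) ^ β| ≤ 40 * r ^ (β - 2) * h ^ 2 := by
  rcases le_total h (r / 2) with hhr | hhr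
  · refine (abs_rpow_second_difference_le_of_le_half hr hh hhr hβ0 hβ2).trans ?_
    gcongr
    norm_num
  · exact abs_rpow_second_difference_le_of_half_le hr hhr hβ0 hβ2

theorem stmt0 (r ε β : ℝ) (hr : 0 < r) (hε : 0 < ε) (hβ0 : 0 < β) (hβ2 : β < 2) :
    |(2 * r ^ β - |r - 2 * ε| ^ β - (r + 2 * ε) ^ β) / (4 * ε ^ 2)| ≤ 64 * r ^ (β - 2) := by
  have hsq : 4 * ε ^ 2 = (2 * ε) ^ 2 := by ring
  have hpos : 0 < (2 * ε) ^ 2 := by positivity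
  rw [hsq, abs_div, abs_of_pos hpos, div_le_iff₀ hpos]
  calc _ ≤ 40 * r ^ (β - 2) * (2 * ε) ^ 2 :=
        abs_rpow_second_difference_le hr (by positivity) hβ0.le hβ2.le
    _ ≤ 64 * r ^ (β - 2) * (2 * ε) ^ 2 := by gcongr; norm_num
end

section
/- Let $0<\beta<1$, $s>0$, $s\le T$, and let $\phi \in C^{\alpha}([0,T])$ with $\alpha > 1-\beta$. Then there is a constant $C$ depending only on $\beta$ and $\alpha$ such that $\big|\int_0^s \phi(r)\, f^{\varepsilon}(r)\, dr\big| \le C\big(\|\phi\|_{\infty}\, s^{\beta-1} + \|\phi\|_{\alpha}\, s^{\alpha+\beta-1}\big)$ for all $\varepsilon>0$, where $f^{\varepsilon}(r) = \frac{1}{4\varepsilon^2}\big(2r^{\beta} - |r-2\varepsilon|^{\beta} - (r+2\varepsilon)^{\beta}\big)$. -/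
/-!
Write `f^ε = K_{2ε}` with `K_h(r) = (2 r^β - |r - h|^β - (r + h)^β) / h²`. Pointwise,
`|K_h(r)| ≲ h^(β-2)` by the `β`-Hölder continuity of `t ↦ t^β`, and
`|K_h(r)| ≲ (r - h)^(β-2)` for `r > h` by a second-order mean value estimate; together
`|K_h(r)| ≲ r^(β-2)` uniformly in `h`. Moreover `∫₀ˢ K_h` is a second difference quotient
of `t^(β+1) / (β+1)`, hence `≲ s^(β-1)`. Splitting `φ = (φ - φ 0) + φ 0`, the first part
is bounded by `‖φ‖_α ∫₀ˢ r^(α+β-2) dr`, finite because `α + β > 1`, and the second by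
`‖φ‖_∞ s^(β-1)`.
-/

open Real MeasureTheory Set Filter Topology

lemma abs_rpow_sub_rpow_le_abs_sub_rpow {p a b : ℝ} (hp : 0 ≤ p) (hp1 : p ≤ 1)
    (ha : 0 ≤ a) (hb : 0 ≤ b) : |a ^ p - b ^ p| ≤ |a - b| ^ p := by
  wlog hba : b ≤ a generalizing a b
  · rw [abs_sub_comm, abs_sub_comm a]
    exact this hb ha (le_of_not_ge hba)
  have hsub := rpow_add_le_add_rpow hb (sub_nonneg.2 hba) hp hp1
  rw [add_sub_cancel] at hsub
  rw [abs_of_nonneg (sub_nonneg.2 (rpow_le_rpow hb hba hp)), abs_of_nonneg (sub_nonneg.2 hba)]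
  linarith

lemma abs_rpow_sub_rpow_le_mul_sub {p a b : ℝ} (hp : p ≤ 1) (hb : 0 < b) (hba : b ≤ a) :
    |a ^ p - b ^ p| ≤ |p| * b ^ (p - 1) * (a - b) := by
  have hderiv : ∀ x ∈ Icc b a, HasDerivWithinAt (· ^ p) (p * x ^ (p - 1)) (Icc b a) x :=
    fun x hx => (hasDerivAt_rpow_const (Or.inl (hb.trans_le hx.1).ne')).hasDerivWithinAt
  refine norm_image_sub_le_of_norm_deriv_le_segment' hderiv (fun x hx => ?_) a ⟨hba, le_rfl⟩
  rw [norm_mul, norm_eq_abs, norm_of_nonneg (rpow_nonneg (hb.trans_le hx.1).le _)]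
  exact mul_le_mul_of_nonneg_left (rpow_le_rpow_of_nonpos hb hx.1 (by linarith)) (abs_nonneg p)

lemma abs_two_mul_rpow_sub_rpow_sub_rpow_le {p x h : ℝ} (hp : p ≤ 2) (hh : 0 < h)
    (hhx : h < x) :
    |2 * x ^ p - (x - h) ^ p - (x + h) ^ p| ≤ |p| * |p - 1| * (x - h) ^ (p - 2) * h ^ 2 := by
  have hderiv : ∀ t ∈ Icc (x - h) x, HasDerivWithinAt (fun t => (t + h) ^ p - t ^ p)
      (p * (t + h) ^ (p - 1) - p * t ^ (p - 1)) (Icc (x - h) x) t := by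
    intro t ht
    have ht0 : 0 < t := by linarith [ht.1]
    exact (((hasDerivAt_id' t).add_const h).rpow_const (Or.inl (by linarith))).sub
      (hasDerivAt_rpow_const (Or.inl ht0.ne')) |>.hasDerivWithinAt |>.congr_deriv (by simp)
  have hbound : ∀ t ∈ Ico (x - h) x,
      ‖p * (t + h) ^ (p - 1) - p * t ^ (p - 1)‖ ≤ |p| * |p - 1| * (x - h) ^ (p - 2) * h := by
    intro t ht
    have ht0 : 0 < t := by linarith [ht.1]
    have hmv := abs_rpow_sub_rpow_le_mul_sub (p := p - 1) (by linarith) ht0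
      (by linarith : t ≤ t + h)
    rw [show p - 1 - 1 = p - 2 by ring, add_sub_cancel_left] at hmv
    rw [norm_eq_abs, ← mul_sub, abs_mul, mul_assoc, mul_assoc]
    refine mul_le_mul_of_nonneg_left (hmv.trans ?_) (abs_nonneg p)
    rw [← mul_assoc]
    exact mul_le_mul_of_nonneg_right (mul_le_mul_of_nonneg_left
      (rpow_le_rpow_of_nonpos (by linarith) ht.1 (by linarith)) (abs_nonneg _)) hh.le
  have hmv := norm_image_sub_le_of_norm_deriv_le_segment' hderiv hbound x ⟨by linarith, le_rfl⟩
  rw [norm_eq_abs, sub_add_cancel, sub_sub_cancel] at hmv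
  calc |2 * x ^ p - (x - h) ^ p - (x + h) ^ p|
      = |(x + h) ^ p - x ^ p - (x ^ p - (x - h) ^ p)| := by rw [← abs_neg]; ring_nf
    _ ≤ _ := hmv.trans_eq (by ring)

lemma continuousOn_of_abs_sub_le_mul_rpow {s : Set ℝ} {φ : ℝ → ℝ} {C α : ℝ}
    (hα : 0 < α)
    (hφ : ∀ u ∈ s, ∀ v ∈ s, |φ u - φ v| ≤ C * |u - v| ^ α) : ContinuousOn φ s := by
  intro u hu
  have hlim : Tendsto (fun v => C * |v - u| ^ α) (𝓝[s] u) (𝓝 0) := by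
    have hcont : Continuous fun v => C * |v - u| ^ α := by
      fun_prop (disch := exact hα.le)
    simpa [hα.ne'] using (hcont.tendsto u).mono_left nhdsWithin_le_nhds
  refine tendsto_iff_dist_tendsto_zero.2 (squeeze_zero' (.of_forall fun _ => dist_nonneg)
    (eventually_nhdsWithin_of_forall fun v hv => ?_) hlim)
  exact hφ v hv u hu

lemma div_two_rpow_le {r q : ℝ} (hr : 0 < r) (hq : -2 ≤ q) : (r / 2) ^ q ≤ 4 * r ^ q := by
  rw [div_rpow hr.le zero_le_two, div_le_iff₀ (by positivity), mul_comm 4, mul_assoc]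
  refine le_mul_of_one_le_right (rpow_nonneg hr.le _) ?_
  calc (1 : ℝ) = 4 * 2 ^ (-2 : ℝ) := by norm_num [rpow_neg, rpow_two]
    _ ≤ 4 * 2 ^ q := by gcongr; norm_num

/-- For `r ≥ 0`, minus the centred second difference quotient of `|·|^β` with step `h`;
the paper's `f^ε` is `negSecondDiffQuot β (2 * ε)`. -/
noncomputable def negSecondDiffQuot (β h r : ℝ) : ℝ :=
  (2 * r ^ β - |r - h| ^ β - (r + h) ^ β) / h ^ 2

section negSecondDiffQuot

variable {β h : ℝ}

lemma continuous_negSecondDiffQuot (hβ : 0 ≤ β) : Continuous (negSecondDiffQuot β h) := by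
  unfold negSecondDiffQuot
  fun_prop (disch := exact hβ)

lemma abs_negSecondDiffQuot_le (hβ0 : 0 ≤ β) (hβ1 : β ≤ 1) (hh : 0 < h) {r : ℝ}
    (hr : 0 ≤ r) :
    |negSecondDiffQuot β h r| ≤ 2 * h ^ (β - 2) := by
  have hleft : |r ^ β - |r - h| ^ β| ≤ h ^ β := by
    refine (abs_rpow_sub_rpow_le_abs_sub_rpow hβ0 hβ1 hr (abs_nonneg _)).trans ?_
    refine rpow_le_rpow (abs_nonneg _) ?_ hβ0
    rw [abs_le]; constructor <;> cases abs_cases (r - h) <;> linarith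
  have hright : |r ^ β - (r + h) ^ β| ≤ h ^ β := by
    refine (abs_rpow_sub_rpow_le_abs_sub_rpow hβ0 hβ1 hr (by linarith)).trans_eq ?_
    rw [sub_add_cancel_left, abs_neg, abs_of_pos hh]
  have hnum : |2 * r ^ β - |r - h| ^ β - (r + h) ^ β| ≤ 2 * h ^ β := by
    calc _ = |(r ^ β - |r - h| ^ β) + (r ^ β - (r + h) ^ β)| := by ring_nf
      _ ≤ _ := (abs_add_le _ _).trans (by linarith)
  rw [negSecondDiffQuot, abs_div, abs_of_pos (pow_pos hh 2), div_le_iff₀ (pow_pos hh 2),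
    mul_assoc, ← rpow_natCast, ← rpow_add hh]
  norm_num
  exact hnum

lemma abs_negSecondDiffQuot_le_rpow (hβ0 : 0 ≤ β) (hβ1 : β ≤ 1) (hh : 0 < h) {r : ℝ}
    (hr : 0 < r) : |negSecondDiffQuot β h r| ≤ 8 * r ^ (β - 2) := by
  suffices |negSecondDiffQuot β h r| ≤ 2 * (r / 2) ^ (β - 2) by
    linarith [div_two_rpow_le hr (show -2 ≤ β - 2 by linarith)]
  rcases le_or_gt r (2 * h) with hrh | hrh
  · refine (abs_negSecondDiffQuot_le hβ0 hβ1 hh hr.le).trans ?_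
    exact mul_le_mul_of_nonneg_left
      (rpow_le_rpow_of_nonpos (by positivity) (by linarith) (by linarith)) zero_le_two
  · have hsd := abs_two_mul_rpow_sub_rpow_sub_rpow_le (p := β) (by linarith) hh (by linarith)
    have hβ : |β| * |β - 1| ≤ 2 := by
      rw [abs_of_nonneg hβ0, abs_of_nonpos (by linarith)]; nlinarith
    have hrh' : (r - h) ^ (β - 2) ≤ (r / 2) ^ (β - 2) :=
      rpow_le_rpow_of_nonpos (by positivity) (by linarith) (by linarith)
    rw [negSecondDiffQuot, abs_div, abs_of_pos (pow_pos hh 2), div_le_iff₀ (pow_pos hh 2),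
      abs_of_pos (by linarith : 0 < r - h)]
    refine hsd.trans (mul_le_mul_of_nonneg_right ?_ (by positivity))
    exact mul_le_mul hβ hrh' (rpow_nonneg (by linarith) _) zero_le_two

lemma integral_abs_sub_rpow {s : ℝ} (hβ : 0 ≤ β) (hh : 0 ≤ h) (hhs : h ≤ s) :
    ∫ r in (0 : ℝ)..s, |r - h| ^ β = (h ^ (β + 1) + (s - h) ^ (β + 1)) / (β + 1) := by
  have hcont : Continuous fun x : ℝ => |x| ^ β := by fun_prop (disch := exact hβ)
  have hhalf : ∀ a, 0 ≤ a → ∫ x in (0 : ℝ)..a, |x| ^ β = a ^ (β + 1) / (β + 1) := by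
    intro a ha
    rw [intervalIntegral.integral_congr (g := fun x => x ^ β),
      integral_rpow (Or.inl (by linarith)),
      zero_rpow (by linarith), sub_zero]
    intro x hx
    rw [uIcc_of_le ha] at hx
    simp only [abs_of_nonneg hx.1]
  rw [intervalIntegral.integral_comp_sub_right (fun x => |x| ^ β),
    ← intervalIntegral.integral_add_adjacent_intervals (b := 0) (hcont.intervalIntegrable _ _)
      (hcont.intervalIntegrable _ _), zero_sub, ← neg_zero,
    ← intervalIntegral.integral_comp_neg, neg_zero]
  simp only [abs_neg]
  rw [hhalf h hh, hhalf _ (by linarith), add_div]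

lemma integral_negSecondDiffQuot (hβ : 0 ≤ β) (hh : 0 < h) {s : ℝ} (hhs : h ≤ s) :
    ∫ r in (0 : ℝ)..s, negSecondDiffQuot β h r
      = (2 * s ^ (β + 1) - (s - h) ^ (β + 1) - (s + h) ^ (β + 1)) / ((β + 1) * h ^ 2) := by
  have hc : Continuous fun x : ℝ => x ^ β := continuous_rpow_const hβ
  have hcabs : Continuous fun r : ℝ => |r - h| ^ β := by fun_prop (disch := exact hβ)
  have hβ1 : -1 < β := by linarith
  have i1 : IntervalIntegrable (fun r : ℝ => 2 * r ^ β) volume 0 s :=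
    (hc.const_mul 2).intervalIntegrable _ _
  have i2 : IntervalIntegrable (fun r : ℝ => |r - h| ^ β) volume 0 s :=
    hcabs.intervalIntegrable _ _
  have i3 : IntervalIntegrable (fun r : ℝ => (r + h) ^ β) volume 0 s :=
    (hc.comp (continuous_add_const h)).intervalIntegrable _ _
  simp only [negSecondDiffQuot, intervalIntegral.integral_div]
  rw [intervalIntegral.integral_sub (i1.sub i2) i3, intervalIntegral.integral_sub i1 i2,
    intervalIntegral.integral_const_mul, integral_rpow (Or.inl hβ1),
    integral_abs_sub_rpow hβ hh.le hhs,
    intervalIntegral.integral_comp_add_right (· ^ β), zero_add, integral_rpow (Or.inl hβ1),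
    zero_rpow (by linarith)]
  field_simp
  ring

lemma abs_integral_negSecondDiffQuot_le (hβ0 : 0 ≤ β) (hβ1 : β ≤ 1) (hh : 0 < h) {s : ℝ}
    (hs : 0 < s) : |∫ r in (0 : ℝ)..s, negSecondDiffQuot β h r| ≤ 8 * s ^ (β - 1) := by
  rcases le_or_gt s (2 * h) with hsh | hsh
  · have hint := intervalIntegral.norm_integral_le_of_norm_le_const (a := 0) (b := s)
      fun r hr => (norm_eq_abs _).trans_le
        (abs_negSecondDiffQuot_le hβ0 hβ1 hh (uIoc_of_le hs.le ▸ hr).1.le)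
    rw [norm_eq_abs, sub_zero, abs_of_pos hs] at hint
    have hhs : h ^ (β - 2) ≤ (s / 2) ^ (β - 2) :=
      rpow_le_rpow_of_nonpos (by positivity) (by linarith) (by linarith)
    have hs4 := div_two_rpow_le hs (show -2 ≤ β - 2 by linarith)
    have hpow : s ^ (β - 2) * s = s ^ (β - 1) := by
      rw [← rpow_add_one hs.ne']; ring_nf
    nlinarith
  · have hsd := abs_two_mul_rpow_sub_rpow_sub_rpow_le (p := β + 1) (by linarith) hh (by linarith)
    rw [add_sub_cancel_right, show β + 1 - 2 = β - 1 by ring,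
      abs_of_pos (by linarith : 0 < β + 1), abs_of_nonneg hβ0] at hsd
    have hsh' : (s - h) ^ (β - 1) ≤ (s / 2) ^ (β - 1) :=
      rpow_le_rpow_of_nonpos (by positivity) (by linarith) (by linarith)
    have hs4 := div_two_rpow_le hs (show -2 ≤ β - 1 by linarith)
    have hden : 0 < (β + 1) * h ^ 2 := by positivity
    rw [integral_negSecondDiffQuot hβ0 hh (by linarith), abs_div, abs_of_pos hden,
      div_le_iff₀ hden]
    have hβs : β * (s - h) ^ (β - 1) ≤ 8 * s ^ (β - 1) := by
      nlinarith [rpow_nonneg (by linarith : 0 ≤ s - h) (β - 1), rpow_nonneg hs.le (β - 1)]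
    calc _ ≤ _ := hsd
      _ = (β + 1) * h ^ 2 * (β * (s - h) ^ (β - 1)) := by ring
      _ ≤ (β + 1) * h ^ 2 * (8 * s ^ (β - 1)) := mul_le_mul_of_nonneg_left hβs hden.le
      _ = _ := by ring

end negSecondDiffQuot

lemma abs_integral_mul_negSecondDiffQuot_le_of_abs_le_rpow {β h α C s : ℝ} {φ : ℝ → ℝ}
    (hβ0 : 0 ≤ β) (hβ1 : β ≤ 1) (hh : 0 < h) (hαβ : 0 < α + β - 1) (hs : 0 ≤ s)
    (hφ : ∀ r ∈ Ioc 0 s, |φ r| ≤ C * r ^ α) :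
    |∫ r in (0 : ℝ)..s, φ r * negSecondDiffQuot β h r|
      ≤ 8 * C * s ^ (α + β - 1) / (α + β - 1) := by
  have hbound : ∀ᵐ r, r ∈ Ioc 0 s →
      ‖φ r * negSecondDiffQuot β h r‖ ≤ 8 * C * r ^ (α + β - 2) := by
    refine ae_of_all _ fun r hr => ?_
    rw [norm_mul, norm_eq_abs, norm_eq_abs, show α + β - 2 = α + (β - 2) by ring,
      rpow_add hr.1]
    calc _ ≤ C * r ^ α * (8 * r ^ (β - 2)) :=
          mul_le_mul (hφ r hr) (abs_negSecondDiffQuot_le_rpow hβ0 hβ1 hh hr.1) (abs_nonneg _)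
            ((abs_nonneg _).trans (hφ r hr))
      _ = _ := by ring
  have hint : IntervalIntegrable (fun r => 8 * C * r ^ (α + β - 2)) volume 0 s :=
    (intervalIntegral.intervalIntegrable_rpow' (by linarith)).const_mul _
  refine (intervalIntegral.norm_integral_le_of_norm_le hs hbound hint).trans_eq ?_
  rw [intervalIntegral.integral_const_mul, integral_rpow (Or.inl (by linarith)),
    show α + β - 2 + 1 = α + β - 1 by ring, zero_rpow hαβ.ne', sub_zero, mul_div_assoc]

lemma abs_integral_mul_negSecondDiffQuot_le {β h α M C s : ℝ} {φ : ℝ → ℝ}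
    (hβ0 : 0 ≤ β) (hβ1 : β ≤ 1) (hh : 0 < h) (hαβ : 0 < α + β - 1) (hs : 0 < s)
    (hcont : ContinuousOn φ (Icc 0 s)) (hφ0 : |φ 0| ≤ M)
    (hφ : ∀ r ∈ Ioc 0 s, |φ r - φ 0| ≤ C * r ^ α) :
    |∫ r in (0 : ℝ)..s, φ r * negSecondDiffQuot β h r|
      ≤ 8 * C * s ^ (α + β - 1) / (α + β - 1) + M * (8 * s ^ (β - 1)) := by
  have hK := continuous_negSecondDiffQuot (h := h) hβ0
  have hi1 : IntervalIntegrable (fun r => (φ r - φ 0) * negSecondDiffQuot β h r) volume 0 s :=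
    (((uIcc_of_le hs.le ▸ hcont).sub continuousOn_const).mul hK.continuousOn).intervalIntegrable
  have hi2 : IntervalIntegrable (fun r => φ 0 * negSecondDiffQuot β h r) volume 0 s :=
    (hK.const_mul _).intervalIntegrable _ _
  have hsplit : ∫ r in (0 : ℝ)..s, φ r * negSecondDiffQuot β h r
      = (∫ r in (0 : ℝ)..s, (φ r - φ 0) * negSecondDiffQuot β h r)
        + φ 0 * ∫ r in (0 : ℝ)..s, negSecondDiffQuot β h r := by
    rw [← intervalIntegral.integral_const_mul, ← intervalIntegral.integral_add hi1 hi2]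
    simp only [sub_mul, sub_add_cancel]
  rw [hsplit]
  refine (abs_add_le _ _).trans (add_le_add
    (abs_integral_mul_negSecondDiffQuot_le_of_abs_le_rpow hβ0 hβ1 hh hαβ hs.le hφ) ?_)
  rw [abs_mul]
  exact mul_le_mul hφ0 (abs_integral_negSecondDiffQuot_le hβ0 hβ1 hh hs) (abs_nonneg _)
    ((abs_nonneg _).trans hφ0)

theorem stmt3 (β α : ℝ) (hβ0 : 0 < β) (hβ1 : β < 1) (hα : 1 - β < α) :
    ∃ C > 0, ∀ (T s : ℝ) (φ : ℝ → ℝ) (Mφ Cα ε : ℝ),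
      0 < s → s ≤ T → 0 < ε →
      (∀ u ∈ Set.Icc (0 : ℝ) T, |φ u| ≤ Mφ) →
      (∀ u ∈ Set.Icc (0 : ℝ) T, ∀ v ∈ Set.Icc (0 : ℝ) T,
        |φ u - φ v| ≤ Cα * |u - v| ^ α) →
      |∫ r in (0:ℝ)..s,
          φ r * ((2 * r ^ β - |r - 2 * ε| ^ β - (r + 2 * ε) ^ β) / (4 * ε ^ 2))|
        ≤ C * (Mφ * s ^ (β - 1) + Cα * s ^ (α + β - 1)) := by
  have hαβ : 0 < α + β - 1 := by linarith
  refine ⟨8 + 8 / (α + β - 1), by positivity, fun T s φ Mφ Cα ε hs hsT hε hM hH => ?_⟩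
  have hkernel : ∀ r, (2 * r ^ β - |r - 2 * ε| ^ β - (r + 2 * ε) ^ β) / (4 * ε ^ 2)
      = negSecondDiffQuot β (2 * ε) r := fun r => by rw [negSecondDiffQuot, mul_pow]; norm_num
  have hs0 : (0 : ℝ) ∈ Icc 0 T := ⟨le_rfl, hs.le.trans hsT⟩
  have hφ0 : |φ 0| ≤ Mφ := hM 0 hs0
  have hφ : ∀ r ∈ Ioc 0 s, |φ r - φ 0| ≤ Cα * r ^ α := fun r hr => by
    simpa [abs_of_pos hr.1] using hH r ⟨hr.1.le, hr.2.trans hsT⟩ 0 hs0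
  have hCα : 0 ≤ Cα :=
    nonneg_of_mul_nonneg_left ((abs_nonneg _).trans (hφ s ⟨hs, le_rfl⟩))
      (rpow_pos_of_pos hs α)
  have hcont : ContinuousOn φ (Icc 0 s) :=
    (continuousOn_of_abs_sub_le_mul_rpow (by linarith) hH).mono (Icc_subset_Icc_right hsT)
  have hX : 0 ≤ Mφ * s ^ (β - 1) := mul_nonneg ((abs_nonneg _).trans hφ0) (rpow_nonneg hs.le _)
  have hY : 0 ≤ Cα * s ^ (α + β - 1) := mul_nonneg hCα (rpow_nonneg hs.le _)
  simp only [hkernel]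
  calc _ ≤ 8 * Cα * s ^ (α + β - 1) / (α + β - 1) + Mφ * (8 * s ^ (β - 1)) :=
        abs_integral_mul_negSecondDiffQuot_le hβ0.le hβ1.le (by positivity) hαβ hs hcont hφ0
          hφ
    _ = 8 * (Mφ * s ^ (β - 1)) + 8 / (α + β - 1) * (Cα * s ^ (α + β - 1)) := by ring
    _ ≤ _ := by nlinarith [mul_nonneg (div_pos (by norm_num : (0 : ℝ) < 8) hαβ).le hX]
end

section
/- Let $H \in (0,1/2)$ and define $h(r) = |r|^{2H}$, so $h'(r) = 2H\,\mathrm{sign}(r)|r|^{2H-1}$ for $r \neq 0$. Then for all $0 < x < y$ and $\Delta > 0$ and all $\beta_1, \beta_2 \in (0,1)$ with $2H + \beta_1 + \beta_2 > 2$, we have $x^{2H-1} - y^{2H-1} - (x+\Delta)^{2H-1} + (y+\Delta)^{2H-1} \le C\, x^{2H+\beta_1+\beta_2-3}\,(y-x)^{1-\beta_1}\,\Delta^{1-\beta_2}$ for a constant $C$ depending only on $H$. -/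
/-!
With `q = 2H - 1 ∈ (-1, 0)`, `u = y - x` and `v = Δ`, the left-hand side is the mixed second
difference of `t ↦ t ^ q` at `x` with steps `u` and `v`, which is symmetric in `u` and `v`.
Tangent-line bounds for the convex decreasing function `t ↦ t ^ q` give two estimates: a
first-order one, `≤ x ^ (q - 1) * min x v`, and, applying the tangent bound once more to
`t ↦ t ^ (q - 1)`, a second-order one, `≤ 2 x ^ (q - 2) v (u + v)`. Together they give
`≤ 4 x ^ (q - 2) min(x, u) min(x, v)`, and `min(x, w) ≤ x ^ β w ^ (1 - β)` finishes the proof.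
-/

open Real

/-- **Bernoulli's inequality** for nonpositive real exponents. -/
theorem one_add_mul_self_le_rpow_one_add_of_nonpos {s : ℝ} (hs : -1 < s) {p : ℝ} (hp : p ≤ 0) :
    1 + p * s ≤ (1 + s) ^ p := by
  have hs' : 0 < 1 + s := by linarith
  have hlog : p * s ≤ p * log (1 + s) :=
    mul_le_mul_of_nonpos_left (by linarith [log_le_sub_one_of_pos hs']) hp
  rw [rpow_def_of_pos hs', mul_comm (log _)]
  linarith [add_one_le_exp (p * log (1 + s))]

theorem rpow_tangent_le_of_nonpos {q a b : ℝ} (hq : q ≤ 0) (ha : 0 < a) (hb : 0 < b) :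
    b ^ q + q * b ^ (q - 1) * (a - b) ≤ a ^ q := by
  have hs : -1 < a / b - 1 := by linarith [div_pos ha hb]
  have hbern := one_add_mul_self_le_rpow_one_add_of_nonpos hs hq
  rw [add_sub_cancel, div_rpow ha.le hb.le, le_div_iff₀ (rpow_pos_of_pos hb q)] at hbern
  rw [rpow_sub_one hb.ne']
  calc b ^ q + q * (b ^ q / b) * (a - b) = (1 + q * (a / b - 1)) * b ^ q := by
        field_simp
    _ ≤ a ^ q := hbern

theorem min_le_rpow_mul_rpow {a b θ : ℝ} (ha : 0 ≤ a) (hb : 0 ≤ b) (hθ₀ : 0 ≤ θ) (hθ₁ : θ ≤ 1) :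
    min a b ≤ a ^ θ * b ^ (1 - θ) := by
  have hmin : 0 ≤ min a b := le_min ha hb
  calc min a b = min a b ^ θ * min a b ^ (1 - θ) := by
        rw [← rpow_add' hmin (by norm_num), add_sub_cancel, rpow_one]
    _ ≤ a ^ θ * b ^ (1 - θ) := by
        gcongr
        exacts [min_le_left a b, min_le_right a b]

def mixedDiff (f : ℝ → ℝ) (x u v : ℝ) : ℝ :=
  f x - f (x + u) - f (x + v) + f (x + u + v)

theorem mixedDiff_comm (f : ℝ → ℝ) (x u v : ℝ) : mixedDiff f x u v = mixedDiff f x v u := by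
  simp only [mixedDiff, add_right_comm x u v]
  ring

section RpowMixedDiff

variable {q x u v : ℝ}

theorem mixedDiff_rpow_le_first_order (hq₀ : q ≤ 0) (hq₁ : -1 ≤ q) (hx : 0 < x) (hu : 0 ≤ u)
    (hv : 0 ≤ v) : mixedDiff (· ^ q) x u v ≤ x ^ (q - 1) * min x v := by
  have hxq : x ^ (q - 1) * x = x ^ q := by rw [rpow_sub_one hx.ne', div_mul_cancel₀ _ hx.ne']
  have hxv : 0 ≤ x ^ (q - 1) * v := mul_nonneg (rpow_pos_of_pos hx _).le hv
  have hmono_u : (x + u + v) ^ q ≤ (x + u) ^ q :=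
    rpow_le_rpow_of_nonpos (by linarith) (by linarith) hq₀
  have htangent := rpow_tangent_le_of_nonpos hq₀ (a := x + v) (by linarith) hx
  have hxv_nonneg : 0 ≤ (x + v) ^ q := rpow_nonneg (by linarith) q
  rw [mul_min_of_nonneg _ _ (rpow_pos_of_pos hx _).le, hxq]
  simp only [mixedDiff]
  refine le_min (by linarith) ?_
  linarith [mul_nonneg (by linarith : 0 ≤ 1 + q) hxv]

theorem mixedDiff_rpow_le_second_order (hq₀ : q ≤ 0) (hq₁ : -1 ≤ q) (hx : 0 < x) (hu : 0 ≤ u)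
    (hv : 0 ≤ v) : mixedDiff (· ^ q) x u v ≤ 2 * x ^ (q - 2) * v * (u + v) := by
  have hxuv : 0 < x + u + v := by linarith
  have htangent_x := rpow_tangent_le_of_nonpos hq₀ (a := x + v) (by linarith) hx
  have htangent_xuv := rpow_tangent_le_of_nonpos hq₀ (a := x + u) (by linarith) hxuv
  have htangent' := rpow_tangent_le_of_nonpos (q := q - 1) (by linarith) hxuv hx
  rw [show q - 1 - 1 = q - 2 by ring] at htangent'
  have hfirst : mixedDiff (· ^ q) x u v ≤ -q * v * (x ^ (q - 1) - (x + u + v) ^ (q - 1)) := by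
    simp only [mixedDiff]
    linarith
  have hprod_nonneg : 0 ≤ x ^ (q - 2) * v * (u + v) := by
    have := rpow_pos_of_pos hx (q - 2)
    positivity
  calc mixedDiff (· ^ q) x u v ≤ -q * v * (x ^ (q - 1) - (x + u + v) ^ (q - 1)) := hfirst
    _ ≤ -q * v * ((1 - q) * x ^ (q - 2) * (x + u + v - x)) := by
        gcongr
        · exact mul_nonneg (neg_nonneg.2 hq₀) hv
        · linarith
    _ = (-q * (1 - q)) * (x ^ (q - 2) * v * (u + v)) := by ring
    _ ≤ 2 * (x ^ (q - 2) * v * (u + v)) := by gcongr; nlinarith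
    _ = 2 * x ^ (q - 2) * v * (u + v) := by ring

theorem mixedDiff_rpow_le (hq₀ : q ≤ 0) (hq₁ : -1 ≤ q) (hx : 0 < x) (hu : 0 ≤ u) (hv : 0 ≤ v) :
    mixedDiff (· ^ q) x u v ≤ 4 * x ^ (q - 2) * min x u * min x v := by
  wlog hvu : v ≤ u generalizing u v
  · rw [mixedDiff_comm, mul_right_comm]
    exact this hv hu (by linarith)
  have hxq : x ^ (q - 2) * x = x ^ (q - 1) := by
    rw [show q - 1 = q - 2 + 1 by ring, rpow_add_one hx.ne']
  rcases le_total x u with hxu | hux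
  · calc mixedDiff (· ^ q) x u v ≤ x ^ (q - 1) * min x v :=
          mixedDiff_rpow_le_first_order hq₀ hq₁ hx hu hv
      _ ≤ 4 * x ^ (q - 2) * min x u * min x v := by
          rw [min_eq_left hxu, ← hxq]
          have := mul_nonneg (mul_nonneg (rpow_pos_of_pos hx (q - 2)).le hx.le) (le_min hx.le hv)
          linarith
  · rw [min_eq_right hux, min_eq_right (hvu.trans hux)]
    calc mixedDiff (· ^ q) x u v ≤ 2 * x ^ (q - 2) * v * (u + v) :=
          mixedDiff_rpow_le_second_order hq₀ hq₁ hx hu hv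
      _ ≤ 4 * x ^ (q - 2) * u * v := by
          have := rpow_pos_of_pos hx (q - 2)
          nlinarith [mul_nonneg (mul_nonneg this.le hv) (sub_nonneg.2 hvu)]

end RpowMixedDiff

theorem stmt4 (H : ℝ) (hH0 : 0 < H) (hH : H < 1/2) :
    ∃ C > 0, ∀ (β₁ β₂ : ℝ), 0 < β₁ → β₁ < 1 → 0 < β₂ → β₂ < 1 →
      2 < 2 * H + β₁ + β₂ →
      ∀ (x y Δ : ℝ), 0 < x → x < y → 0 < Δ →
      x ^ (2 * H - 1) - y ^ (2 * H - 1) - (x + Δ) ^ (2 * H - 1) + (y + Δ) ^ (2 * H - 1)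
        ≤ C * x ^ (2 * H + β₁ + β₂ - 3) * (y - x) ^ (1 - β₁) * Δ ^ (1 - β₂) := by
  refine ⟨4, by norm_num, fun β₁ β₂ hβ₁ hβ₁' hβ₂ hβ₂' _ x y Δ hx hxy hΔ => ?_⟩
  have hyx : 0 ≤ y - x := by linarith
  have hexp : x ^ (2 * H - 1 - 2) * x ^ β₁ * x ^ β₂ = x ^ (2 * H + β₁ + β₂ - 3) := by
    rw [← rpow_add hx, ← rpow_add hx]
    ring_nf
  calc x ^ (2 * H - 1) - y ^ (2 * H - 1) - (x + Δ) ^ (2 * H - 1) + (y + Δ) ^ (2 * H - 1)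
      = mixedDiff (· ^ (2 * H - 1)) x (y - x) Δ := by simp only [mixedDiff, add_sub_cancel]
    _ ≤ 4 * x ^ (2 * H - 1 - 2) * min x (y - x) * min x Δ :=
        mixedDiff_rpow_le (by linarith) (by linarith) hx hyx hΔ.le
    _ ≤ 4 * x ^ (2 * H - 1 - 2) * (x ^ β₁ * (y - x) ^ (1 - β₁)) * (x ^ β₂ * Δ ^ (1 - β₂)) := by
        gcongr
        · exact min_le_rpow_mul_rpow hx.le hyx hβ₁.le hβ₁'.le
        · exact min_le_rpow_mul_rpow hx.le hΔ.le hβ₂.le hβ₂'.le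
    _ = 4 * x ^ (2 * H + β₁ + β₂ - 3) * (y - x) ^ (1 - β₁) * Δ ^ (1 - β₂) := by
        rw [← hexp]
        ring
end

section
/- Let $H \in (0,1/2)$, $\Delta \le 0$, and $1-2H < \gamma < 1$. Then for all $0 < r < u$, with $h'(r) = 2H\,\mathrm{sign}(r)|r|^{2H-1}$, and any $\beta_1,\beta_2>0$ with $\beta_1+\beta_2 < 2H$: $|h'(r-\Delta) - h'(u-\Delta) - h'(r) + h'(u)| \le C\, r^{2H-1-\beta_1-\beta_2}\,(u-r)^{\beta_1}\,|\Delta|^{\beta_2}$, where $C$ depends only on $H$, $\beta_1$, $\beta_2$. -/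
/-!
With `p = 2H - 1 ∈ (-1, 0)` and `t = -Δ ≥ 0`, all four arguments are positive and the quantity
is `2H · D` with `D = (r^p - (r+t)^p) - (u^p - (u+t)^p)`. Convexity of `x ↦ x^p` gives `D ≥ 0`,
and `D` is bounded by each of `r^p`, `r^(p-1) (u-r)` and `r^(p-1) t` (the last two by the tangent
line at `r`). Interpolating the three bounds with weights `1 - β₁ - β₂`, `β₁`, `β₂` gives the claim
with `C = 2H`.
-/

open Real Set

theorem rpow_sub_rpow_le_of_nonpos {p a b : ℝ} (hp : p ≤ 0) (ha : 0 < a) (hab : a ≤ b) :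
    a ^ p - b ^ p ≤ -p * a ^ (p - 1) * (b - a) := by
  have hg : ∀ x : ℝ, 0 < x → HasDerivAt (fun x : ℝ => x ^ p - p * a ^ (p - 1) * x)
      (p * x ^ (p - 1) - p * a ^ (p - 1)) x := fun x hx =>
    ((hasDerivAt_rpow_const (Or.inl hx.ne')).sub
      ((hasDerivAt_id' x).const_mul (p * a ^ (p - 1)))).congr_deriv (by ring)
  have hmono : MonotoneOn (fun x : ℝ => x ^ p - p * a ^ (p - 1) * x) (Ici a) := by
    refine monotoneOn_of_hasDerivWithinAt_nonneg (convex_Ici a)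
      (fun x hx => (hg x (ha.trans_le hx)).continuousAt.continuousWithinAt)
      (fun x hx => (hg x (ha.trans (by simpa using hx))).hasDerivWithinAt) fun x hx => ?_
    rw [interior_Ici] at hx
    have : x ^ (p - 1) ≤ a ^ (p - 1) := rpow_le_rpow_of_nonpos ha hx.le (by linarith)
    nlinarith
  have := hmono self_mem_Ici hab hab
  linarith

theorem antitoneOn_rpow_sub_rpow_add {p t : ℝ} (hp : p ≤ 0) (ht : 0 ≤ t) :
    AntitoneOn (fun x : ℝ => x ^ p - (x + t) ^ p) (Ioi 0) := by
  have hg : ∀ x : ℝ, 0 < x →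
      HasDerivAt (fun x : ℝ => x ^ p - (x + t) ^ p) (p * x ^ (p - 1) - p * (x + t) ^ (p - 1)) x :=
    fun x hx =>
      ((hasDerivAt_rpow_const (Or.inl hx.ne')).sub
        (((hasDerivAt_id' x).add_const t).rpow_const (Or.inl (by positivity)))).congr_deriv
          (by ring)
  refine antitoneOn_of_hasDerivWithinAt_nonpos (convex_Ioi 0)
    (fun x hx => (hg x hx).continuousAt.continuousWithinAt)
    (fun x hx => (hg x (by simpa using hx)).hasDerivWithinAt) fun x hx => ?_
  rw [interior_Ioi] at hx
  have : (x + t) ^ (p - 1) ≤ x ^ (p - 1) := rpow_le_rpow_of_nonpos hx (by linarith) (by linarith)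
  nlinarith

theorem le_rpow_mul_rpow_mul_rpow {d X Y Z a b c : ℝ} (hd : 0 ≤ d) (hX : d ≤ X) (hY : d ≤ Y)
    (hZ : d ≤ Z) (ha : 0 ≤ a) (hb : 0 ≤ b) (hc : 0 ≤ c) (habc : a + b + c = 1) :
    d ≤ X ^ a * Y ^ b * Z ^ c := by
  have := hd.trans hX
  have := hd.trans hY
  calc d = d ^ (a + b + c) := by rw [habc, rpow_one]
    _ = d ^ a * d ^ b * d ^ c := by
      rw [rpow_add_of_nonneg hd (by positivity) hc, rpow_add_of_nonneg hd ha hb]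
    _ ≤ X ^ a * Y ^ b * Z ^ c := by gcongr

theorem abs_rpow_second_difference_le_s9 {p r u t β₁ β₂ : ℝ} (hp₁ : -1 ≤ p) (hp₀ : p ≤ 0)
    (hr : 0 < r) (hru : r ≤ u) (ht : 0 ≤ t) (hβ₁ : 0 ≤ β₁) (hβ₂ : 0 ≤ β₂) (hβ : β₁ + β₂ ≤ 1) :
    |(r + t) ^ p - (u + t) ^ p - r ^ p + u ^ p| ≤ r ^ (p - β₁ - β₂) * (u - r) ^ β₁ * t ^ β₂ := by
  have hu : 0 < u := hr.trans_le hru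
  set D := (r ^ p - (r + t) ^ p) - (u ^ p - (u + t) ^ p) with hD
  have hD₀ : 0 ≤ D := sub_nonneg.2 (antitoneOn_rpow_sub_rpow_add hp₀ ht hr hu hru)
  have h_eq : |(r + t) ^ p - (u + t) ^ p - r ^ p + u ^ p| = D := by
    rw [show (r + t) ^ p - (u + t) ^ p - r ^ p + u ^ p = -D by rw [hD]; ring, abs_neg,
      abs_of_nonneg hD₀]
  have h_tangent : ∀ v, 0 ≤ v → r ^ p - (r + v) ^ p ≤ r ^ (p - 1) * v := fun v hv => by
    have := rpow_sub_rpow_le_of_nonpos hp₀ hr (le_add_of_nonneg_right hv)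
    have : 0 ≤ r ^ (p - 1) * v := by positivity
    nlinarith
  have hrt_ut : (u + t) ^ p ≤ (r + t) ^ p :=
    rpow_le_rpow_of_nonpos (by positivity) (by linarith) hp₀
  have hu_ut : (u + t) ^ p ≤ u ^ p := rpow_le_rpow_of_nonpos hu (by linarith) hp₀
  have hD_le : D ≤ r ^ p := by
    have := rpow_nonneg hu.le p; linarith
  have hD_le_u : D ≤ r ^ (p - 1) * (u - r) := by
    have := h_tangent (u - r) (by linarith); rw [add_sub_cancel] at this; linarith
  have hD_le_t : D ≤ r ^ (p - 1) * t := by linarith [h_tangent t ht]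
  have hr_pow : r ^ (p - β₁ - β₂) = r ^ (p * (1 - β₁ - β₂)) * r ^ ((p - 1) * β₁) *
      r ^ ((p - 1) * β₂) := by
    rw [← rpow_add hr, ← rpow_add hr]; ring_nf
  calc |(r + t) ^ p - (u + t) ^ p - r ^ p + u ^ p|
      = D := h_eq
    _ ≤ (r ^ p) ^ (1 - β₁ - β₂) * (r ^ (p - 1) * (u - r)) ^ β₁ * (r ^ (p - 1) * t) ^ β₂ :=
      le_rpow_mul_rpow_mul_rpow hD₀ hD_le hD_le_u hD_le_t (by linarith) hβ₁ hβ₂ (by ring)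
    _ = r ^ (p - β₁ - β₂) * (u - r) ^ β₁ * t ^ β₂ := by
      rw [mul_rpow (by positivity) (by linarith), mul_rpow (by positivity) ht, ← rpow_mul hr.le,
        ← rpow_mul hr.le, ← rpow_mul hr.le, hr_pow]
      ring

theorem stmt9_general (H : ℝ) (hH0 : 0 < H) (hH : H < 1/2) :
    ∀ (β₁ β₂ : ℝ), 0 < β₁ → 0 < β₂ → β₁ + β₂ < 2 * H →
    ∃ C > 0, ∀ (r u Δ : ℝ), 0 < r → r < u → Δ ≤ 0 →
      (let h' : ℝ → ℝ := fun x => 2 * H * Real.sign x * |x| ^ (2 * H - 1)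
      |h' (r - Δ) - h' (u - Δ) - h' r + h' u|
        ≤ C * r ^ (2 * H - 1 - β₁ - β₂) * (u - r) ^ β₁ * |Δ| ^ β₂) := by
  intro β₁ β₂ hβ₁ hβ₂ hβ
  refine ⟨2 * H, by positivity, fun r u Δ hr hru hΔ => ?_⟩
  have h'_pos : ∀ x : ℝ, 0 < x →
      2 * H * Real.sign x * |x| ^ (2 * H - 1) = 2 * H * x ^ (2 * H - 1) := fun x hx => by
    rw [Real.sign_of_pos hx, abs_of_pos hx, mul_one]
  have hrΔ : r - Δ = r + |Δ| := by rw [abs_of_nonpos hΔ]; ring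
  have huΔ : u - Δ = u + |Δ| := by rw [abs_of_nonpos hΔ]; ring
  have key := abs_rpow_second_difference_le_s9 (p := 2 * H - 1) (t := |Δ|) (by linarith)
    (by linarith) hr hru.le (abs_nonneg Δ) hβ₁.le hβ₂.le (by linarith)
  dsimp only
  rw [h'_pos _ (by linarith), h'_pos _ (by linarith), h'_pos r hr, h'_pos u (by linarith),
    hrΔ, huΔ]
  calc _ = 2 * H * |(r + |Δ|) ^ (2 * H - 1) - (u + |Δ|) ^ (2 * H - 1) - r ^ (2 * H - 1)
        + u ^ (2 * H - 1)| := by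
        rw [← mul_sub, ← mul_sub, ← mul_add, abs_mul, abs_of_pos (by positivity : 0 < 2 * H)]
    _ ≤ 2 * H * (r ^ (2 * H - 1 - β₁ - β₂) * (u - r) ^ β₁ * |Δ| ^ β₂) := by gcongr
    _ = _ := by ring

theorem stmt9 (H γ : ℝ) (hH0 : 0 < H) (hH : H < 1/2) (hγ1 : 1 - 2 * H < γ) (hγ2 : γ < 1) :
    ∀ (β₁ β₂ : ℝ), 0 < β₁ → 0 < β₂ → β₁ + β₂ < 2 * H →
    ∃ C > 0, ∀ (r u Δ : ℝ), 0 < r → r < u → Δ ≤ 0 →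
      (let h' : ℝ → ℝ := fun x => 2 * H * Real.sign x * |x| ^ (2 * H - 1)
      |h' (r - Δ) - h' (u - Δ) - h' r + h' u|
        ≤ C * r ^ (2 * H - 1 - β₁ - β₂) * (u - r) ^ β₁ * |Δ| ^ β₂) :=
  stmt9_general H hH0 hH
end

section
/- Let $H\in(0,1/2)$, $T>0$, $0<s\le T$, and let $\phi\in C^{\alpha}([0,T])$ with $\alpha>1-2H$. Define $g^{\varepsilon}(u) = \frac{1}{2\varepsilon}\big((u+\varepsilon)^{2H-1} - \mathrm{sign}(u-\varepsilon)|u-\varepsilon|^{2H-1}\big)$ for $u>0$, $\varepsilon>0$. Then $\lim_{\varepsilon\to 0^+}\Big[\phi(s)\int_0^s g^{\varepsilon}(u)\,du + \int_0^s (\phi(s-u)-\phi(s))\,g^{\varepsilon}(u)\,du\Big] = \phi(s)\,s^{2H-1} + (2H-1)\int_0^s(\phi(s-u)-\phi(s))\,u^{2H-2}\,du$. -/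
/-!
Write `r = 2H - 1 ∈ (-1, 0)`; `g^ε` is the symmetric difference quotient of the odd extension
`x ↦ sign x * |x| ^ r` of `x ↦ x ^ r`. Hence `∫₀ˢ g^ε` is the symmetric difference quotient of
`x ↦ x ^ (r + 1) / (r + 1)` at `s`, which tends to `s ^ r`.

For the second term put `ψ u = φ (s - u) - φ s`, so that `|ψ u| ≤ C u ^ α`. On `(0, 2ε]` the
kernel admits no uniform majorant (it blows up at `u = ε`), but there `∫ |g^ε| = O(ε ^ r)` and
`|ψ| = O(ε ^ α)`, so this piece is `O(ε ^ (α + r)) → 0`. On `(2ε, s]` the mean value theorem gives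
`|g^ε u| ≤ |r| 2 ^ (1 - r) u ^ (r - 1)`, and `u ^ (α + r - 1)` is integrable since `α + r > 0`,
so dominated convergence applies.
-/

open Real Filter Topology MeasureTheory Set

theorem HasDerivAt.tendsto_symmetric_slope {f : ℝ → ℝ} {f' x : ℝ} (hf : HasDerivAt f f' x) :
    Tendsto (fun h => (f (x + h) - f (x - h)) / (2 * h)) (𝓝[≠] 0) (𝓝 f') := by
  have hright := hasDerivAt_iff_tendsto_slope_zero.1 hf
  have hneg : Tendsto (fun h : ℝ => -h) (𝓝[≠] 0) (𝓝[≠] 0) :=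
    (continuous_neg.tendsto' 0 0 neg_zero).inf
      (tendsto_principal_principal.2 fun _ hh => neg_ne_zero.2 hh)
  have hmean := (hright.add (hright.comp hneg)).div_const 2
  rw [add_self_div_two] at hmean
  refine hmean.congr' ?_
  filter_upwards [self_mem_nhdsWithin] with h (hh : h ≠ 0)
  simp only [Function.comp_def, smul_eq_mul, ← sub_eq_add_neg]
  field_simp
  ring

theorem continuousOn_of_dist_le_rpow {X Y : Type*} [PseudoMetricSpace X] [PseudoMetricSpace Y]
    {f : X → Y} {S : Set X} {C α : ℝ} (hα : 0 < α)
    (hf : ∀ x ∈ S, ∀ y ∈ S, dist (f x) (f y) ≤ C * dist x y ^ α) : ContinuousOn f S := by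
  intro x hx
  rw [ContinuousWithinAt, tendsto_iff_dist_tendsto_zero]
  have hbound : Tendsto (fun y => C * dist y x ^ α) (𝓝 x) (𝓝 0) := by
    have : Tendsto (fun y => C * dist y x ^ α) (𝓝 x) (𝓝 (C * dist x x ^ α)) :=
      (((continuous_id.dist continuous_const).rpow_const fun _ => Or.inr hα.le).const_mul
        C).tendsto x
    simpa [zero_rpow hα.ne'] using this
  refine squeeze_zero' (Eventually.of_forall fun _ => dist_nonneg) ?_
    (hbound.mono_left nhdsWithin_le_nhds)
  filter_upwards [self_mem_nhdsWithin] with y hy using hf y hy x hx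

theorem nonneg_of_abs_le_mul_rpow {y C u α : ℝ} (hu : 0 < u) (h : |y| ≤ C * u ^ α) : 0 ≤ C :=
  nonneg_of_mul_nonneg_left ((abs_nonneg y).trans h) (rpow_pos_of_pos hu α)

namespace Real

theorem sign_mul_abs_rpow_of_pos {x : ℝ} (hx : 0 < x) (r : ℝ) :
    Real.sign x * |x| ^ r = x ^ r := by
  rw [sign_of_pos hx, abs_of_pos hx, one_mul]

theorem sign_mul_abs_rpow_of_neg {x : ℝ} (hx : x < 0) (r : ℝ) :
    Real.sign x * |x| ^ r = -(-x) ^ r := by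
  rw [sign_of_neg hx, abs_of_neg hx, neg_one_mul]

end Real

section AbsRpow

variable {r a b : ℝ}

theorem intervalIntegrable_neg_rpow (hr : -1 < r) (a b : ℝ) :
    IntervalIntegrable (fun x => (-x) ^ r) volume a b := by
  simpa using (IntervalIntegrable.iff_comp_neg (by simp)).1
    (intervalIntegral.intervalIntegrable_rpow' hr (a := -a) (b := -b))

theorem integral_neg_rpow (hr : -1 < r) (a : ℝ) :
    ∫ x in a..0, (-x) ^ r = (-a) ^ (r + 1) / (r + 1) := by
  rw [intervalIntegral.integral_comp_neg (fun x => x ^ r), neg_zero, integral_rpow (Or.inl hr),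
    zero_rpow (by linarith), sub_zero]

theorem intervalIntegrable_abs_rpow (hr : -1 < r) (ha : a ≤ 0) (hb : 0 ≤ b) :
    IntervalIntegrable (fun x => |x| ^ r) volume a b := by
  refine ((intervalIntegrable_neg_rpow hr a 0).congr_uIoo fun x hx => ?_).trans
    ((intervalIntegral.intervalIntegrable_rpow' hr).congr_uIoo fun x hx => ?_)
  · rw [uIoo_of_le ha] at hx
    simp only [abs_of_neg hx.2]
  · rw [uIoo_of_le hb] at hx
    simp only [abs_of_pos hx.1]

theorem integral_abs_rpow (hr : -1 < r) (ha : a ≤ 0) (hb : 0 ≤ b) :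
    ∫ x in a..b, |x| ^ r = ((-a) ^ (r + 1) + b ^ (r + 1)) / (r + 1) := by
  have hneg : ∫ x in a..0, |x| ^ r = ∫ x in a..0, (-x) ^ r :=
    intervalIntegral.integral_congr_uIoo fun x hx => by
      rw [uIoo_of_le ha] at hx
      simp only [abs_of_neg hx.2]
  have hpos : ∫ x in (0 : ℝ)..b, |x| ^ r = ∫ x in (0 : ℝ)..b, x ^ r :=
    intervalIntegral.integral_congr_uIoo fun x hx => by
      rw [uIoo_of_le hb] at hx
      simp only [abs_of_pos hx.1]
  rw [← intervalIntegral.integral_add_adjacent_intervals (intervalIntegrable_abs_rpow hr ha le_rfl)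
    (intervalIntegrable_abs_rpow hr le_rfl hb), hneg, hpos, integral_neg_rpow hr a,
    integral_rpow (Or.inl hr), zero_rpow (by linarith), add_div, sub_zero]

theorem intervalIntegrable_sign_mul_abs_rpow (hr : -1 < r) (ha : a ≤ 0) (hb : 0 ≤ b) :
    IntervalIntegrable (fun x => Real.sign x * |x| ^ r) volume a b := by
  refine ((intervalIntegrable_neg_rpow hr a 0).neg.congr_uIoo fun x hx => ?_).trans
    ((intervalIntegral.intervalIntegrable_rpow' hr).congr_uIoo fun x hx => ?_)
  · rw [uIoo_of_le ha] at hx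
    simp only [Real.sign_mul_abs_rpow_of_neg hx.2, Pi.neg_apply]
  · rw [uIoo_of_le hb] at hx
    simp only [Real.sign_mul_abs_rpow_of_pos hx.1]

theorem integral_sign_mul_abs_rpow (hr : -1 < r) (ha : a ≤ 0) (hb : 0 ≤ b) :
    ∫ x in a..b, Real.sign x * |x| ^ r = (b ^ (r + 1) - (-a) ^ (r + 1)) / (r + 1) := by
  have hneg : ∫ x in a..0, Real.sign x * |x| ^ r = ∫ x in a..0, -(-x) ^ r :=
    intervalIntegral.integral_congr_uIoo fun x hx => by
      rw [uIoo_of_le ha] at hx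
      simp only [Real.sign_mul_abs_rpow_of_neg hx.2]
  have hpos : ∫ x in (0 : ℝ)..b, Real.sign x * |x| ^ r = ∫ x in (0 : ℝ)..b, x ^ r :=
    intervalIntegral.integral_congr_uIoo fun x hx => by
      rw [uIoo_of_le hb] at hx
      simp only [Real.sign_mul_abs_rpow_of_pos hx.1]
  rw [← intervalIntegral.integral_add_adjacent_intervals
    (intervalIntegrable_sign_mul_abs_rpow hr ha le_rfl)
    (intervalIntegrable_sign_mul_abs_rpow hr le_rfl hb), hneg, hpos, intervalIntegral.integral_neg,
    integral_neg_rpow hr a, integral_rpow (Or.inl hr), zero_rpow (by linarith),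
    sub_zero]
  ring

end AbsRpow

/-- `approxKernel (2 * H - 1) ε` is the kernel `g^ε` of the paper. -/
noncomputable def approxKernel (r ε u : ℝ) : ℝ :=
  ((u + ε) ^ r - Real.sign (u - ε) * |u - ε| ^ r) / (2 * ε)

section ApproxKernel

variable {r α C s ε u c : ℝ} {ψ : ℝ → ℝ}

theorem approxKernel_of_lt (h : ε < u) :
    approxKernel r ε u = ((u + ε) ^ r - (u - ε) ^ r) / (2 * ε) := by
  rw [approxKernel, Real.sign_mul_abs_rpow_of_pos (sub_pos.2 h)]

theorem intervalIntegrable_add_const_rpow (hr : -1 < r) (ε a b : ℝ) :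
    IntervalIntegrable (fun u => (u + ε) ^ r) volume a b := by
  simpa using
    (intervalIntegral.intervalIntegrable_rpow' hr (a := a + ε) (b := b + ε)).comp_add_right ε

theorem intervalIntegrable_sign_mul_abs_sub_rpow (hr : -1 < r) (hε : 0 ≤ ε) (hc : ε ≤ c) :
    IntervalIntegrable (fun u => Real.sign (u - ε) * |u - ε| ^ r) volume 0 c := by
  simpa using (intervalIntegrable_sign_mul_abs_rpow hr (neg_nonpos.2 hε)
    (sub_nonneg.2 hc)).comp_sub_right ε

theorem intervalIntegrable_approxKernel (hr : -1 < r) (hε : 0 ≤ ε) (hc : ε ≤ c) :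
    IntervalIntegrable (approxKernel r ε) volume 0 c :=
  ((intervalIntegrable_add_const_rpow hr ε 0 c).sub
    (intervalIntegrable_sign_mul_abs_sub_rpow hr hε hc)).div_const _

theorem integral_approxKernel (hr : -1 < r) (hε : 0 ≤ ε) (hc : ε ≤ c) :
    ∫ u in (0 : ℝ)..c, approxKernel r ε u
      = ((c + ε) ^ (r + 1) / (r + 1) - (c - ε) ^ (r + 1) / (r + 1)) / (2 * ε) := by
  have hshift : ∫ u in (0 : ℝ)..c, (u + ε) ^ r = ((c + ε) ^ (r + 1) - ε ^ (r + 1)) / (r + 1) := by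
    rw [intervalIntegral.integral_comp_add_right (· ^ r), zero_add, integral_rpow (Or.inl hr)]
  have hodd : ∫ u in (0 : ℝ)..c, Real.sign (u - ε) * |u - ε| ^ r
      = ((c - ε) ^ (r + 1) - ε ^ (r + 1)) / (r + 1) := by
    rw [intervalIntegral.integral_comp_sub_right (fun x => Real.sign x * |x| ^ r), zero_sub,
      integral_sign_mul_abs_rpow hr (neg_nonpos.2 hε) (sub_nonneg.2 hc), neg_neg]
  simp only [approxKernel]
  rw [intervalIntegral.integral_div, intervalIntegral.integral_sub
    (intervalIntegrable_add_const_rpow hr ε 0 c)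
    (intervalIntegrable_sign_mul_abs_sub_rpow hr hε hc), hshift, hodd]
  ring

theorem tendsto_integral_approxKernel (hr : -1 < r) (hc : 0 < c) :
    Tendsto (fun ε => ∫ u in (0 : ℝ)..c, approxKernel r ε u) (𝓝[>] 0) (𝓝 (c ^ r)) := by
  have hderiv : HasDerivAt (fun x => x ^ (r + 1) / (r + 1)) (c ^ r) c := by
    have := (hasDerivAt_rpow_const (p := r + 1) (Or.inl hc.ne')).div_const (r + 1)
    rwa [add_sub_cancel_right, mul_div_cancel_left₀ _ (by linarith : r + 1 ≠ 0)] at this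
  refine (hderiv.tendsto_symmetric_slope.mono_left
    (nhdsWithin_mono _ fun _ h => ne_of_gt h)).congr' ?_
  filter_upwards [Ioo_mem_nhdsGT hc] with ε hε
  rw [integral_approxKernel hr hε.1.le hε.2.le]

theorem tendsto_approxKernel (hu : 0 < u) :
    Tendsto (fun ε => approxKernel r ε u) (𝓝[>] 0) (𝓝 (r * u ^ (r - 1))) := by
  refine ((hasDerivAt_rpow_const (Or.inl hu.ne')).tendsto_symmetric_slope.mono_left
    (nhdsWithin_mono _ fun _ h => ne_of_gt h)).congr' ?_
  filter_upwards [Ioo_mem_nhdsGT hu] with ε hε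
  rw [approxKernel_of_lt hε.2]

theorem abs_approxKernel_le (hr : r ≤ 1) (hε : 0 < ε) (hu : 2 * ε ≤ u) :
    |approxKernel r ε u| ≤ |r| * 2 ^ (1 - r) * u ^ (r - 1) := by
  have hu0 : 0 < u - ε := by linarith
  have hmvt : |(u + ε) ^ r - (u - ε) ^ r| ≤ |r| * (u - ε) ^ (r - 1) * (2 * ε) := by
    have := (convex_Icc (u - ε) (u + ε)).norm_image_sub_le_of_norm_hasDerivWithin_le
      (f := (· ^ r)) (f' := fun x => r * x ^ (r - 1)) (C := |r| * (u - ε) ^ (r - 1))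
      (fun x hx => (hasDerivAt_rpow_const (Or.inl (hu0.trans_le hx.1).ne')).hasDerivWithinAt)
      (fun x hx => ?_) (left_mem_Icc.2 (by linarith)) (right_mem_Icc.2 (by linarith))
    · simpa [show u + ε - (u - ε) = 2 * ε by ring, abs_of_pos hε] using this
    · rw [norm_mul, Real.norm_eq_abs, Real.norm_eq_abs,
        abs_of_nonneg (rpow_nonneg (hu0.le.trans hx.1) _)]
      exact mul_le_mul_of_nonneg_left (rpow_le_rpow_of_nonpos hu0 hx.1 (by linarith)) (abs_nonneg r)
  have hhalf : (u - ε) ^ (r - 1) ≤ 2 ^ (1 - r) * u ^ (r - 1) := by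
    calc (u - ε) ^ (r - 1) ≤ (u / 2) ^ (r - 1) :=
          rpow_le_rpow_of_nonpos (by linarith) (by linarith) (by linarith)
      _ = 2 ^ (1 - r) * u ^ (r - 1) := by
        rw [div_rpow (by linarith) zero_le_two, show 1 - r = -(r - 1) by ring, rpow_neg zero_le_two]
        ring
  rw [approxKernel_of_lt (by linarith), abs_div, abs_of_pos (by linarith : (0 : ℝ) < 2 * ε),
    div_le_iff₀ (by linarith)]
  calc |(u + ε) ^ r - (u - ε) ^ r| ≤ |r| * (u - ε) ^ (r - 1) * (2 * ε) := hmvt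
    _ ≤ |r| * (2 ^ (1 - r) * u ^ (r - 1)) * (2 * ε) := by gcongr
    _ = _ := by ring

theorem abs_approxKernel_le_of_nonneg (hr : r ≤ 0) (hε : 0 < ε) (hu : 0 ≤ u) :
    |approxKernel r ε u| ≤ (ε ^ r + |u - ε| ^ r) / (2 * ε) := by
  rw [approxKernel, abs_div, abs_of_pos (by linarith : (0 : ℝ) < 2 * ε)]
  gcongr
  refine (abs_sub _ _).trans (add_le_add ?_ ?_)
  · rw [abs_of_nonneg (rpow_nonneg (by linarith) _)]
    exact rpow_le_rpow_of_nonpos hε (by linarith) hr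
  · rw [abs_mul, abs_of_nonneg (rpow_nonneg (abs_nonneg _) _)]
    refine mul_le_of_le_one_left (rpow_nonneg (abs_nonneg _) _) ?_
    rcases Real.sign_apply_eq (u - ε) with h | h | h <;> simp [h]

theorem intervalIntegrable_mul_approxKernel (hr : -1 < r) (hε : 0 ≤ ε) (hεs : ε ≤ s) {M : ℝ}
    (hψm : AEStronglyMeasurable ψ (volume.restrict (Ioc 0 s))) (hψ : ∀ u ∈ Ioc 0 s, |ψ u| ≤ M) :
    IntervalIntegrable (fun u => ψ u * approxKernel r ε u) volume 0 s := by
  have hk := intervalIntegrable_approxKernel hr hε hεs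
  rw [intervalIntegrable_iff_integrableOn_Ioc_of_le (hε.trans hεs)] at hk ⊢
  exact hk.bdd_mul hψm ((ae_restrict_iff' measurableSet_Ioc).2 (.of_forall hψ))

theorem norm_integral_mul_approxKernel_le (hr1 : -1 < r) (hr0 : r ≤ 0) (hα : 0 ≤ α) (hε : 0 < ε)
    (hψ : ∀ u ∈ Ioc 0 (2 * ε), |ψ u| ≤ C * u ^ α) :
    ‖∫ u in (0 : ℝ)..2 * ε, ψ u * approxKernel r ε u‖
      ≤ C * 2 ^ α * ((r + 2) / (r + 1)) * ε ^ (α + r) := by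
  have h2ε : (0 : ℝ) < 2 * ε := by linarith
  have hC : 0 ≤ C := nonneg_of_abs_le_mul_rpow h2ε (hψ _ ⟨h2ε, le_rfl⟩)
  have habs : IntervalIntegrable (fun u => |u - ε| ^ r) volume 0 (2 * ε) := by
    simpa [two_mul] using
      (intervalIntegrable_abs_rpow hr1 (neg_nonpos.2 hε.le) hε.le).comp_sub_right ε
  have hintegral : ∫ u in (0 : ℝ)..2 * ε, |u - ε| ^ r = 2 * ε ^ (r + 1) / (r + 1) := by
    rw [intervalIntegral.integral_comp_sub_right (|·| ^ r), zero_sub, two_mul, add_sub_cancel_right,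
      integral_abs_rpow hr1 (neg_nonpos.2 hε.le) hε.le, neg_neg, ← two_mul]
  calc ‖∫ u in (0 : ℝ)..2 * ε, ψ u * approxKernel r ε u‖
      ≤ ∫ u in (0 : ℝ)..2 * ε, C * (2 * ε) ^ α * ((ε ^ r + |u - ε| ^ r) / (2 * ε)) := by
        refine intervalIntegral.norm_integral_le_of_norm_le h2ε.le (.of_forall fun u hu => ?_)
          (((intervalIntegrable_const).add habs).div_const _ |>.const_mul _)
        rw [norm_mul, Real.norm_eq_abs, Real.norm_eq_abs]
        exact mul_le_mul
          ((hψ u hu).trans (mul_le_mul_of_nonneg_left (rpow_le_rpow hu.1.le hu.2 hα) hC))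
          (abs_approxKernel_le_of_nonneg hr0 hε hu.1.le) (abs_nonneg _) (by positivity)
    _ = C * 2 ^ α * ((r + 2) / (r + 1)) * ε ^ (α + r) := by
        rw [intervalIntegral.integral_const_mul, intervalIntegral.integral_div,
          intervalIntegral.integral_add intervalIntegrable_const habs, hintegral,
          intervalIntegral.integral_const, smul_eq_mul, sub_zero, mul_rpow zero_le_two hε.le,
          rpow_add_one hε.ne', rpow_add hε]
        field_simp [show r + 1 ≠ 0 by linarith]
        ring

theorem tendsto_setIntegral_mul_approxKernel_tail (hr1 : -1 < r) (hr : r ≤ 1) (hαr : 0 < α + r)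
    (hs : 0 < s) (hψm : AEStronglyMeasurable ψ (volume.restrict (Ioc 0 s)))
    (hψ : ∀ u ∈ Ioc 0 s, |ψ u| ≤ C * u ^ α) :
    Tendsto
      (fun ε => ∫ u in Ioc 0 s, (Ioc (2 * ε) s).indicator (fun u => ψ u * approxKernel r ε u) u)
      (𝓝[>] 0) (𝓝 (∫ u in Ioc 0 s, ψ u * (r * u ^ (r - 1)))) := by
  refine tendsto_integral_filter_of_dominated_convergence
    (fun u => C * (|r| * 2 ^ (1 - r)) * u ^ (α + (r - 1))) ?_ ?_ ?_ ?_
  · filter_upwards [Ioo_mem_nhdsGT hs] with ε hε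
    exact (hψm.mul (intervalIntegrable_approxKernel hr1 hε.1.le hε.2.le).aestronglyMeasurable
      ).indicator measurableSet_Ioc
  · filter_upwards [self_mem_nhdsWithin] with ε (hε : 0 < ε)
    refine (ae_restrict_iff' measurableSet_Ioc).2 (.of_forall fun u hu => ?_)
    by_cases hmem : u ∈ Ioc (2 * ε) s
    · rw [indicator_of_mem hmem, norm_mul, Real.norm_eq_abs, Real.norm_eq_abs, rpow_add hu.1]
      calc |ψ u| * |approxKernel r ε u| ≤ C * u ^ α * (|r| * 2 ^ (1 - r) * u ^ (r - 1)) :=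
            mul_le_mul (hψ u hu) (abs_approxKernel_le hr hε hmem.1.le) (abs_nonneg _)
              ((abs_nonneg _).trans (hψ u hu))
        _ = _ := by ring
    · rw [indicator_of_notMem hmem, norm_zero]
      exact mul_nonneg (mul_nonneg (nonneg_of_abs_le_mul_rpow hu.1 (hψ u hu)) (by positivity))
        (rpow_nonneg hu.1.le _)
  · exact ((intervalIntegral.intervalIntegrable_rpow' (by linarith)).const_mul _).1
  · refine (ae_restrict_iff' measurableSet_Ioc).2 (.of_forall fun u hu => ?_)
    refine ((tendsto_approxKernel hu.1).const_mul (ψ u)).congr' ?_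
    filter_upwards [Ioo_mem_nhdsGT (half_pos hu.1)] with ε hε
    rw [indicator_of_mem (show u ∈ Ioc (2 * ε) s from ⟨by linarith [hε.2], hu.2⟩)]

theorem tendsto_integral_mul_approxKernel (hr1 : -1 < r) (hr0 : r ≤ 0) (hαr : 0 < α + r)
    (hs : 0 < s) (hψm : AEStronglyMeasurable ψ (volume.restrict (Ioc 0 s)))
    (hψ : ∀ u ∈ Ioc 0 s, |ψ u| ≤ C * u ^ α) :
    Tendsto (fun ε => ∫ u in (0 : ℝ)..s, ψ u * approxKernel r ε u) (𝓝[>] 0)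
      (𝓝 (r * ∫ u in (0 : ℝ)..s, ψ u * u ^ (r - 1))) := by
  have hα : 0 ≤ α := by linarith
  have hC : 0 ≤ C := nonneg_of_abs_le_mul_rpow hs (hψ s ⟨hs, le_rfl⟩)
  have hhead : Tendsto (fun ε => ∫ u in (0 : ℝ)..2 * ε, ψ u * approxKernel r ε u) (𝓝[>] 0)
      (𝓝 0) := by
    have hpow : Tendsto (fun ε : ℝ => ε ^ (α + r)) (𝓝[>] 0) (𝓝 0) := by
      simpa [zero_rpow hαr.ne'] using
        (continuousAt_rpow_const 0 _ (Or.inr hαr.le)).tendsto.mono_left nhdsWithin_le_nhds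
    refine squeeze_zero_norm' ?_ (by simpa using hpow.const_mul (C * 2 ^ α * ((r + 2) / (r + 1))))
    filter_upwards [Ioo_mem_nhdsGT (half_pos hs)] with ε hε
    exact norm_integral_mul_approxKernel_le hr1 hr0 hα hε.1
      fun u hu => hψ u ⟨hu.1, by linarith [hu.2, hε.2]⟩
  have htail := tendsto_setIntegral_mul_approxKernel_tail hr1 (hr0.trans zero_le_one) hαr hs hψm hψ
  have hlimit :
      ∫ u in Ioc 0 s, ψ u * (r * u ^ (r - 1)) = r * ∫ u in (0 : ℝ)..s, ψ u * u ^ (r - 1) := by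
    rw [intervalIntegral.integral_of_le hs.le, ← integral_const_mul]
    congr 1 with u
    ring
  rw [← hlimit, ← zero_add (∫ u in Ioc 0 s, _)]
  refine (hhead.add htail).congr' ?_
  filter_upwards [Ioo_mem_nhdsGT (half_pos hs)] with ε hε
  have h2εs : 2 * ε ≤ s := by linarith [hε.2]
  have hmem : 2 * ε ∈ uIcc 0 s := by rw [uIcc_of_le hs.le]; exact ⟨by linarith [hε.1], h2εs⟩
  have hint := intervalIntegrable_mul_approxKernel hr1 hε.1.le (by linarith) hψm
    fun u hu => (hψ u hu).trans (mul_le_mul_of_nonneg_left (rpow_le_rpow hu.1.le hu.2 hα) hC)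
  rw [setIntegral_indicator measurableSet_Ioc,
    inter_eq_self_of_subset_right (Ioc_subset_Ioc_left (by linarith [hε.1])),
    ← intervalIntegral.integral_of_le h2εs, intervalIntegral.integral_add_adjacent_intervals
      (hint.mono_set (uIcc_subset_uIcc_left hmem)) (hint.mono_set (uIcc_subset_uIcc_right hmem))]

end ApproxKernel

theorem stmt13 (H T s α : ℝ) (hH0 : 0 < H) (hH : H < 1/2) (hs : 0 < s) (hsT : s ≤ T)
    (hα : 1 - 2 * H < α) (φ : ℝ → ℝ) (Cα : ℝ)
    (hφ : ∀ u ∈ Set.Icc (0 : ℝ) T, ∀ v ∈ Set.Icc (0 : ℝ) T,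
      |φ u - φ v| ≤ Cα * |u - v| ^ α) :
    Tendsto (fun ε : ℝ =>
        φ s * (∫ u in (0:ℝ)..s,
            ((u + ε) ^ (2 * H - 1) - Real.sign (u - ε) * |u - ε| ^ (2 * H - 1))
              / (2 * ε))
          + ∫ u in (0:ℝ)..s, (φ (s - u) - φ s) *
              (((u + ε) ^ (2 * H - 1) - Real.sign (u - ε) * |u - ε| ^ (2 * H - 1))
                / (2 * ε)))
      (𝓝[>] 0)
      (𝓝 (φ s * s ^ (2 * H - 1) +
        (2 * H - 1) * ∫ u in (0:ℝ)..s, (φ (s - u) - φ s) * u ^ (2 * H - 2))) := by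
  have hφc : ContinuousOn φ (Icc 0 T) :=
    continuousOn_of_dist_le_rpow (by linarith) fun u hu v hv => by
      simpa only [Real.dist_eq] using hφ u hu v hv
  have hreflect : MapsTo (fun u => s - u) (Icc 0 s) (Icc 0 T) := fun u hu =>
    ⟨by linarith [hu.2], by linarith [hu.1]⟩
  have hψm : AEStronglyMeasurable (fun u => φ (s - u) - φ s) (volume.restrict (Ioc 0 s)) :=
    (((hφc.comp (continuousOn_const.sub continuousOn_id) hreflect).sub continuousOn_const).mono
      Ioc_subset_Icc_self).aestronglyMeasurable measurableSet_Ioc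
  have hψ : ∀ u ∈ Ioc 0 s, |φ (s - u) - φ s| ≤ Cα * u ^ α := fun u hu => by
    simpa [abs_of_pos hu.1] using hφ _ (hreflect (Ioc_subset_Icc_self hu)) s ⟨hs.le, hsT⟩
  rw [show 2 * H - 2 = 2 * H - 1 - 1 by ring]
  exact ((tendsto_integral_approxKernel (by linarith) hs).const_mul (φ s)).add
    (tendsto_integral_mul_approxKernel (by linarith) (by linarith) (by linarith) hs hψm hψ)
end

section
/- Let $H\in(0,1/2)$, $0<\alpha'<1$, $0<\beta<2H$ with $\alpha'+\beta>1$, and $T>0$. Then there is a constant $C$ such that for all $0<\Delta<t\le T$: $\int_0^{t-\Delta}\int_0^u \frac{|h'(v)-h'(v+\Delta)|}{(u-v)^{1-\alpha'}}\,dv\,du \le C\,\Delta^{\beta}$, where $h'(v)=2H v^{2H-1}$ for $v>0$. -/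
/-!
With `p = 2H - 1 ∈ (-1, 0)` and `0 ≤ β ≤ 1`, the increment of `v ^ p` satisfies
`v ^ p - (v + Δ) ^ p ≤ v ^ p * min 1 (Δ / v) ≤ Δ ^ β * v ^ (p - β)`.
Hence the inner integral is at most `2H Δ ^ β ∫₀ᵘ v ^ (p - β) (u - v) ^ (α' - 1) dv`, a Beta-type
integral (convergent because `p - β > -1` and `α' > 0`) equal to a constant times
`u ^ (p - β + α')`; the constant is bounded by splitting `[0, u]` at `u / 2`, where the factor that
blows up on the other half is at most its value at `u / 2`. Integrating `u ^ (p - β + α')` over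
`[0, t - Δ] ⊆ [0, T]` gives `C`.
-/

open Real MeasureTheory Set

lemma intervalIntegral_le_of_nonneg_of_le {f g : ℝ → ℝ} {a b : ℝ} (hab : a ≤ b)
    (hg : IntervalIntegrable g volume a b) (hf : ∀ x ∈ Ioc a b, 0 ≤ f x)
    (hfg : ∀ x ∈ Ioc a b, f x ≤ g x) : ∫ x in a..b, f x ≤ ∫ x in a..b, g x := by
  rw [intervalIntegral.integral_of_le hab, intervalIntegral.integral_of_le hab]
  exact integral_mono_of_nonneg (ae_restrict_of_forall_mem measurableSet_Ioc hf) hg.1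
    (ae_restrict_of_forall_mem measurableSet_Ioc hfg)

lemma integral_rpow_of_neg_one_lt {r : ℝ} (hr : -1 < r) (b : ℝ) :
    ∫ x in (0 : ℝ)..b, x ^ r = b ^ (r + 1) / (r + 1) := by
  rw [integral_rpow (Or.inl hr), zero_rpow (by linarith), sub_zero]

lemma integral_sub_rpow_of_neg_one_lt {r : ℝ} (hr : -1 < r) (b : ℝ) :
    ∫ x in (0 : ℝ)..b, (b - x) ^ r = b ^ (r + 1) / (r + 1) := by
  rw [intervalIntegral.integral_comp_sub_left (fun x => x ^ r), sub_self, sub_zero,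
    integral_rpow_of_neg_one_lt hr]

lemma intervalIntegrable_sub_rpow {r : ℝ} (hr : -1 < r) (b : ℝ) :
    IntervalIntegrable (fun x => (b - x) ^ r) volume 0 b := by
  simpa using ((intervalIntegral.intervalIntegrable_rpow' hr (a := 0) (b := b)).comp_sub_left b).symm

lemma one_sub_one_add_rpow_le_min {p x : ℝ} (hp : -1 ≤ p) (hx : 0 ≤ x) :
    1 - (1 + x) ^ p ≤ min 1 x := by
  have h1x : 1 ≤ 1 + x := by linarith
  refine le_min (by linarith [rpow_nonneg (zero_le_one.trans h1x) p]) ?_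
  have hinv : 1 - x ≤ (1 + x)⁻¹ := by
    rw [← one_div, le_div_iff₀ (by linarith)]
    nlinarith
  have hmono : (1 + x) ^ (-1 : ℝ) ≤ (1 + x) ^ p := rpow_le_rpow_of_exponent_le h1x hp
  rw [rpow_neg_one] at hmono
  linarith

lemma min_one_le_rpow {x β : ℝ} (hx : 0 ≤ x) (hβ0 : 0 ≤ β) (hβ1 : β ≤ 1) :
    min 1 x ≤ x ^ β := by
  rcases le_total x 1 with h | h
  · exact (min_le_right _ _).trans (by simpa using rpow_le_rpow_of_exponent_ge' hx h hβ0 hβ1)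
  · exact (min_le_left _ _).trans (one_le_rpow h hβ0)

lemma rpow_sub_rpow_add_le {p β v Δ : ℝ} (hp : -1 ≤ p) (hβ0 : 0 ≤ β) (hβ1 : β ≤ 1)
    (hv : 0 < v) (hΔ : 0 ≤ Δ) : v ^ p - (v + Δ) ^ p ≤ Δ ^ β * v ^ (p - β) := by
  have hx : 0 ≤ Δ / v := div_nonneg hΔ hv.le
  calc v ^ p - (v + Δ) ^ p = v ^ p * (1 - (1 + Δ / v) ^ p) := by
        rw [mul_sub, mul_one, ← mul_rpow hv.le (by positivity), mul_add, mul_one,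
          mul_div_cancel₀ _ hv.ne']
    _ ≤ v ^ p * (Δ / v) ^ β := by
        gcongr
        exact (one_sub_one_add_rpow_le_min hp hx).trans (min_one_le_rpow hx hβ0 hβ1)
    _ = Δ ^ β * v ^ (p - β) := by
        rw [div_rpow hΔ hv.le, rpow_sub hv]
        field_simp

lemma abs_rpow_sub_rpow_add_le {p β v Δ : ℝ} (hp0 : -1 ≤ p) (hp1 : p ≤ 0) (hβ0 : 0 ≤ β)
    (hβ1 : β ≤ 1) (hv : 0 < v) (hΔ : 0 ≤ Δ) : |v ^ p - (v + Δ) ^ p| ≤ Δ ^ β * v ^ (p - β) := by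
  rw [abs_of_nonneg (sub_nonneg.2 (rpow_le_rpow_of_nonpos hv (by linarith) hp1))]
  exact rpow_sub_rpow_add_le hp0 hβ0 hβ1 hv hΔ

lemma rpow_mul_rpow_le_of_nonpos {a c v w : ℝ} (ha : a ≤ 0) (hc : c ≤ 0) (hv : 0 ≤ v)
    (hw : 0 ≤ w) (hvw : 0 < v + w) :
    v ^ a * w ^ c ≤ ((v + w) / 2) ^ c * v ^ a + ((v + w) / 2) ^ a * w ^ c := by
  have hva := rpow_nonneg hv a
  have hwc := rpow_nonneg hw c
  have hm : 0 < (v + w) / 2 := by positivity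
  rcases le_total v w with h | h
  · have : w ^ c ≤ ((v + w) / 2) ^ c := rpow_le_rpow_of_nonpos hm (by linarith) hc
    nlinarith [rpow_nonneg hm.le a]
  · have : v ^ a ≤ ((v + w) / 2) ^ a := rpow_le_rpow_of_nonpos hm (by linarith) ha
    nlinarith [rpow_nonneg hm.le c]

/-- Bound for the Beta function `B(a + 1, c + 1)`, obtained by splitting `[0, 1]` at `1 / 2`. -/
noncomputable def betaMajorant (a c : ℝ) : ℝ := 2 ^ (-c) / (a + 1) + 2 ^ (-a) / (c + 1)

lemma betaMajorant_pos {a c : ℝ} (ha : -1 < a) (hc : -1 < c) : 0 < betaMajorant a c := by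
  unfold betaMajorant
  have := rpow_pos_of_pos two_pos (-c)
  have := rpow_pos_of_pos two_pos (-a)
  exact add_pos (div_pos (by positivity) (by linarith)) (div_pos (by positivity) (by linarith))

lemma half_rpow_mul_rpow {u : ℝ} (hu : 0 < u) (c b : ℝ) :
    (u / 2) ^ c * u ^ b = 2 ^ (-c) * u ^ (c + b) := by
  rw [div_rpow hu.le zero_le_two, rpow_add hu, rpow_neg zero_le_two]
  ring

section BetaIntegral

variable {a c u : ℝ}

lemma rpow_mul_sub_rpow_le (ha : a ≤ 0) (hc : c ≤ 0) {v : ℝ} (hv : v ∈ Ioc 0 u) :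
    v ^ a * (u - v) ^ c ≤ (u / 2) ^ c * v ^ a + (u / 2) ^ a * (u - v) ^ c := by
  simpa using rpow_mul_rpow_le_of_nonpos ha hc hv.1.le (sub_nonneg.2 hv.2) (by linarith [hv.1, hv.2])

lemma intervalIntegrable_rpow_mul_sub_rpow (ha : -1 < a) (ha0 : a ≤ 0) (hc : -1 < c)
    (hc0 : c ≤ 0) (hu : 0 < u) :
    IntervalIntegrable (fun v => v ^ a * (u - v) ^ c) volume 0 u := by
  refine IntervalIntegrable.mono_fun'
    (((intervalIntegral.intervalIntegrable_rpow' ha).const_mul ((u / 2) ^ c)).add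
      ((intervalIntegrable_sub_rpow hc u).const_mul ((u / 2) ^ a)))
    (by fun_prop : Measurable fun v : ℝ => v ^ a * (u - v) ^ c).aestronglyMeasurable ?_
  rw [uIoc_of_le hu.le]
  refine ae_restrict_of_forall_mem measurableSet_Ioc fun v hv => ?_
  dsimp only
  rw [norm_of_nonneg (mul_nonneg (rpow_nonneg hv.1.le _) (rpow_nonneg (sub_nonneg.2 hv.2) _))]
  exact rpow_mul_sub_rpow_le ha0 hc0 hv

lemma integral_rpow_mul_sub_rpow_le (ha : -1 < a) (ha0 : a ≤ 0) (hc : -1 < c) (hc0 : c ≤ 0)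
    (hu : 0 < u) :
    ∫ v in (0 : ℝ)..u, v ^ a * (u - v) ^ c ≤ betaMajorant a c * u ^ (a + c + 1) := by
  have hia := intervalIntegral.intervalIntegrable_rpow' ha (a := 0) (b := u)
  have hic := intervalIntegrable_sub_rpow hc u
  calc ∫ v in (0 : ℝ)..u, v ^ a * (u - v) ^ c
      ≤ ∫ v in (0 : ℝ)..u, (u / 2) ^ c * v ^ a + (u / 2) ^ a * (u - v) ^ c :=
        intervalIntegral_le_of_nonneg_of_le hu.le ((hia.const_mul _).add (hic.const_mul _))
          (fun v hv => mul_nonneg (rpow_nonneg hv.1.le _) (rpow_nonneg (sub_nonneg.2 hv.2) _))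
          fun v hv => rpow_mul_sub_rpow_le ha0 hc0 hv
    _ = (u / 2) ^ c * (u ^ (a + 1) / (a + 1)) + (u / 2) ^ a * (u ^ (c + 1) / (c + 1)) := by
        rw [intervalIntegral.integral_add (hia.const_mul _) (hic.const_mul _),
          intervalIntegral.integral_const_mul, intervalIntegral.integral_const_mul,
          integral_rpow_of_neg_one_lt ha, integral_sub_rpow_of_neg_one_lt hc]
    _ = betaMajorant a c * u ^ (a + c + 1) := by
        rw [mul_div_assoc', mul_div_assoc', half_rpow_mul_rpow hu, half_rpow_mul_rpow hu,
          betaMajorant]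
        ring_nf

end BetaIntegral

lemma integral_abs_rpow_sub_rpow_add_div_le {c p α β u Δ : ℝ} (hp : p ≤ 0) (hβ : 0 ≤ β)
    (hpβ : -1 < p - β) (hα0 : 0 < α) (hα1 : α ≤ 1) (hu : 0 < u) (hΔ : 0 ≤ Δ) :
    ∫ v in (0 : ℝ)..u, |c * v ^ p - c * (v + Δ) ^ p| / (u - v) ^ (1 - α)
      ≤ |c| * Δ ^ β * betaMajorant (p - β) (α - 1) * u ^ (p - β + α) := by
  have hint := intervalIntegrable_rpow_mul_sub_rpow hpβ (by linarith) (by linarith : -1 < α - 1)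
    (by linarith) hu
  calc ∫ v in (0 : ℝ)..u, |c * v ^ p - c * (v + Δ) ^ p| / (u - v) ^ (1 - α)
      ≤ ∫ v in (0 : ℝ)..u, |c| * Δ ^ β * (v ^ (p - β) * (u - v) ^ (α - 1)) := by
        refine intervalIntegral_le_of_nonneg_of_le hu.le (hint.const_mul _)
          (fun v hv => div_nonneg (abs_nonneg _) (rpow_nonneg (sub_nonneg.2 hv.2) _))
          fun v hv => ?_
        rw [← mul_sub, abs_mul, div_eq_mul_inv, ← rpow_neg (sub_nonneg.2 hv.2), neg_sub]
        calc |c| * |v ^ p - (v + Δ) ^ p| * (u - v) ^ (α - 1)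
            ≤ |c| * (Δ ^ β * v ^ (p - β)) * (u - v) ^ (α - 1) := by
              have := rpow_nonneg (sub_nonneg.2 hv.2) (α - 1)
              gcongr
              exact abs_rpow_sub_rpow_add_le (by linarith) hp hβ (by linarith) hv.1 hΔ
          _ = |c| * Δ ^ β * (v ^ (p - β) * (u - v) ^ (α - 1)) := by ring
    _ = |c| * Δ ^ β * ∫ v in (0 : ℝ)..u, v ^ (p - β) * (u - v) ^ (α - 1) :=
        intervalIntegral.integral_const_mul _ _
    _ ≤ |c| * Δ ^ β * (betaMajorant (p - β) (α - 1) * u ^ (p - β + (α - 1) + 1)) := by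
        gcongr
        exact integral_rpow_mul_sub_rpow_le hpβ (by linarith) (by linarith) (by linarith) hu
    _ = |c| * Δ ^ β * betaMajorant (p - β) (α - 1) * u ^ (p - β + α) := by
        rw [show p - β + (α - 1) + 1 = p - β + α by ring]
        ring

theorem stmt16_general (H T α' β : ℝ) (hH0 : 0 < H) (hH : H < 1/2) (hT : 0 < T)
    (hα'0 : 0 < α') (hα'1 : α' < 1) (hβ0 : 0 < β) (hβH : β < 2 * H) :
    ∃ C > 0, ∀ (Δ t : ℝ), 0 < Δ → Δ < t → t ≤ T →
      (∫ u in (0:ℝ)..(t - Δ), ∫ v in (0:ℝ)..u,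
          |2 * H * v ^ (2 * H - 1) - 2 * H * (v + Δ) ^ (2 * H - 1)|
            / (u - v) ^ (1 - α'))
        ≤ C * Δ ^ β := by
  set K := 2 * H * betaMajorant (2 * H - 1 - β) (α' - 1)
  set γ := 2 * H - 1 - β + α'
  have hγ : -1 < γ := by linarith
  have hK : 0 < K := mul_pos (by linarith) (betaMajorant_pos (by linarith) (by linarith))
  refine ⟨K * T ^ (γ + 1) / (γ + 1), div_pos (mul_pos hK (rpow_pos_of_pos hT _)) (by linarith),
    fun Δ t hΔ hΔt htT => ?_⟩
  have hinner : ∀ u ∈ Ioc 0 (t - Δ), ∫ v in (0:ℝ)..u,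
      |2 * H * v ^ (2 * H - 1) - 2 * H * (v + Δ) ^ (2 * H - 1)| / (u - v) ^ (1 - α')
        ≤ Δ ^ β * K * u ^ γ := fun u hu => by
    have := integral_abs_rpow_sub_rpow_add_div_le (c := 2 * H) (p := 2 * H - 1) (by linarith)
      hβ0.le (by linarith) hα'0 hα'1.le hu.1 hΔ.le
    rwa [abs_of_pos (by linarith), mul_comm (2 * H), mul_assoc (Δ ^ β)] at this
  calc _ ≤ ∫ u in (0:ℝ)..(t - Δ), Δ ^ β * K * u ^ γ :=
        intervalIntegral_le_of_nonneg_of_le (by linarith)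
          ((intervalIntegral.intervalIntegrable_rpow' hγ).const_mul _)
          (fun u hu => intervalIntegral.integral_nonneg hu.1.le fun v hv =>
            div_nonneg (abs_nonneg _) (rpow_nonneg (sub_nonneg.2 hv.2) _)) hinner
    _ = Δ ^ β * K * ((t - Δ) ^ (γ + 1) / (γ + 1)) := by
        rw [intervalIntegral.integral_const_mul, integral_rpow_of_neg_one_lt hγ]
    _ ≤ Δ ^ β * K * (T ^ (γ + 1) / (γ + 1)) := by
        gcongr <;> linarith
    _ = K * T ^ (γ + 1) / (γ + 1) * Δ ^ β := by ring

theorem stmt16 (H T α' β : ℝ) (hH0 : 0 < H) (hH : H < 1/2) (hT : 0 < T)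
    (hα'0 : 0 < α') (hα'1 : α' < 1) (hβ0 : 0 < β) (hβH : β < 2 * H)
    (hαβ : 1 < α' + β) :
    ∃ C > 0, ∀ (Δ t : ℝ), 0 < Δ → Δ < t → t ≤ T →
      (∫ u in (0:ℝ)..(t - Δ), ∫ v in (0:ℝ)..u,
          |2 * H * v ^ (2 * H - 1) - 2 * H * (v + Δ) ^ (2 * H - 1)|
            / (u - v) ^ (1 - α'))
        ≤ C * Δ ^ β :=
  stmt16_general H T α' β hH0 hH hT hα'0 hα'1 hβ0 hβH
end

section
/- Let $H\in(0,1/2)$, $0<\beta_1,\beta_2<1$ with $\beta_1+\beta_2<2H$, and $\alpha'\in(0,1)$ with $\alpha'+\beta_1>1$. Then there is a constant $C$ such that for all $0\le r<s$: $\int_r^s \frac{|h'(r-\Delta)-h'(u-\Delta)-h'(r)+h'(u)|}{(u-r)^{2-\alpha'}}\,du \le C\, r^{2H-1-\beta_1-\beta_2}\,(s-r)^{\alpha'+\beta_1-1}\,|\Delta|^{\beta_2}$ for every $\Delta\le 0$, where $h'(v)=2H\,\mathrm{sign}(v)|v|^{2H-1}$. -/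
/-!
On positive arguments `h'` is `2H · x ^ γ` with `γ = 2H - 1 < 0`. Since `x ↦ x ^ γ` is
`(-γ) r ^ (γ - 1)`-Lipschitz on `[r, ∞)` and decreasing, the second difference
`(r + δ) ^ γ - (u + δ) ^ γ - r ^ γ + u ^ γ` (with `δ = -Δ`) is bounded by
`(-γ) r ^ (γ - 1) (u - r)`, by `(-γ) r ^ (γ - 1) δ` and by `r ^ γ`. Interpolating these with weights `β₁`, `β₂`,
`1 - β₁ - β₂` gives the pointwise bound `r ^ (γ - β₁ - β₂) (u - r) ^ β₁ δ ^ β₂`, and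
`(u - r) ^ (α' + β₁ - 2)` is integrable at `r` because `α' + β₁ > 1`.
-/

open Real MeasureTheory Set

section RpowEstimates

variable {γ : ℝ}

lemma abs_rpow_sub_rpow_le_of_nonpos (hγ : γ ≤ 0) {a x y : ℝ} (ha : 0 < a) (hx : a ≤ x)
    (hy : a ≤ y) : |y ^ γ - x ^ γ| ≤ -γ * a ^ (γ - 1) * |y - x| := by
  have hderiv : ∀ z ∈ Ici a, HasDerivWithinAt (fun z => z ^ γ) (γ * z ^ (γ - 1)) (Ici a) z :=
    fun z hz => (hasDerivAt_rpow_const (Or.inl (ha.trans_le hz).ne')).hasDerivWithinAt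
  have hbound : ∀ z ∈ Ici a, ‖γ * z ^ (γ - 1)‖ ≤ -γ * a ^ (γ - 1) := by
    intro z hz
    rw [norm_mul, norm_of_nonpos hγ, norm_of_nonneg (rpow_nonneg (ha.le.trans hz) _)]
    exact mul_le_mul_of_nonneg_left (rpow_le_rpow_of_nonpos ha hz (by linarith)) (by linarith)
  exact (convex_Ici a).norm_image_sub_le_of_norm_hasDerivWithin_le hderiv hbound hx hy

lemma rpow_sub_rpow_mem_Icc_of_nonpos (hγ : γ ≤ 0) {a x y : ℝ} (ha : 0 < a) (hax : a ≤ x)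
    (hxy : x ≤ y) : x ^ γ - y ^ γ ∈ Icc 0 (-γ * a ^ (γ - 1) * (y - x)) := by
  refine ⟨sub_nonneg.2 (rpow_le_rpow_of_nonpos (ha.trans_le hax) hxy hγ), ?_⟩
  have h := abs_rpow_sub_rpow_le_of_nonpos hγ ha hax (hax.trans hxy)
  rw [abs_of_nonneg (sub_nonneg.2 hxy), abs_sub_comm] at h
  exact (le_abs_self _).trans h

lemma le_rpow_mul_rpow_mul_rpow_of_le {D A B E β₁ β₂ : ℝ} (hD : 0 ≤ D) (hβ₁ : 0 ≤ β₁)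
    (hβ₂ : 0 ≤ β₂) (hβ : β₁ + β₂ ≤ 1) (hA : D ≤ A) (hB : D ≤ B) (hE : D ≤ E) :
    D ≤ A ^ β₁ * B ^ β₂ * E ^ (1 - β₁ - β₂) := by
  have := hD.trans hA; have := hD.trans hB; have := hD.trans hE
  rcases hD.eq_or_lt with rfl | hD
  · positivity
  calc D = D ^ β₁ * D ^ β₂ * D ^ (1 - β₁ - β₂) := by
        rw [← rpow_add hD, ← rpow_add hD]; norm_num
    _ ≤ A ^ β₁ * B ^ β₂ * E ^ (1 - β₁ - β₂) := by gcongr; linarith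

lemma abs_rpow_second_diff_le (hγ : γ ≤ 0) {β₁ β₂ r u δ : ℝ} (hβ₁ : 0 ≤ β₁) (hβ₂ : 0 ≤ β₂)
    (hβ : β₁ + β₂ ≤ 1) (hr : 0 < r) (hru : r ≤ u) (hδ : 0 ≤ δ) :
    |(r + δ) ^ γ - (u + δ) ^ γ - r ^ γ + u ^ γ| ≤
      (-γ) ^ (β₁ + β₂) * r ^ (γ - β₁ - β₂) * (u - r) ^ β₁ * δ ^ β₂ := by
  have hA := rpow_sub_rpow_mem_Icc_of_nonpos hγ hr (x := r + δ) (y := u + δ) (by linarith)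
    (by linarith)
  have hB := rpow_sub_rpow_mem_Icc_of_nonpos hγ hr le_rfl hru
  have hC := rpow_sub_rpow_mem_Icc_of_nonpos hγ hr (x := r) (y := r + δ) le_rfl (by linarith)
  have hD := rpow_sub_rpow_mem_Icc_of_nonpos hγ hr (x := u) (y := u + δ) hru (by linarith)
  rw [add_sub_add_right_eq_sub] at hA
  rw [add_sub_cancel_left] at hC hD
  have hsplit : (r + δ) ^ γ - (u + δ) ^ γ - r ^ γ + u ^ γ
      = ((r + δ) ^ γ - (u + δ) ^ γ) - (r ^ γ - u ^ γ) := by ring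
  have h_u : |(r + δ) ^ γ - (u + δ) ^ γ - r ^ γ + u ^ γ| ≤ -γ * r ^ (γ - 1) * (u - r) := by
    rw [hsplit]
    exact abs_sub_le_of_nonneg_of_le hA.1 hA.2 hB.1 hB.2
  have h_δ : |(r + δ) ^ γ - (u + δ) ^ γ - r ^ γ + u ^ γ| ≤ -γ * r ^ (γ - 1) * δ := by
    rw [show (r + δ) ^ γ - (u + δ) ^ γ - r ^ γ + u ^ γ
        = (u ^ γ - (u + δ) ^ γ) - (r ^ γ - (r + δ) ^ γ) by ring]
    exact abs_sub_le_of_nonneg_of_le hD.1 hD.2 hC.1 hC.2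
  have h_r : |(r + δ) ^ γ - (u + δ) ^ γ - r ^ γ + u ^ γ| ≤ r ^ γ := by
    have hrδ : (r + δ) ^ γ ≤ r ^ γ := rpow_le_rpow_of_nonpos hr (by linarith) hγ
    have huδ : 0 ≤ (u + δ) ^ γ := rpow_nonneg (by linarith) γ
    have hu : 0 ≤ u ^ γ := rpow_nonneg (by linarith) γ
    rw [hsplit]
    exact abs_sub_le_of_nonneg_of_le hA.1 (by linarith) hB.1 (by linarith)
  refine (le_rpow_mul_rpow_mul_rpow_of_le (abs_nonneg _) hβ₁ hβ₂ hβ h_u h_δ h_r).trans_eq ?_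
  have hK : 0 ≤ -γ := by linarith
  have hr' : 0 ≤ r ^ (γ - 1) := rpow_nonneg hr.le _
  rw [mul_rpow (by positivity) (by linarith), mul_rpow (by positivity) hδ, mul_rpow hK hr',
    mul_rpow hK hr', ← rpow_mul hr.le, ← rpow_mul hr.le, ← rpow_mul hr.le,
    rpow_add_of_nonneg hK hβ₁ hβ₂,
    show γ - β₁ - β₂ = (γ - 1) * β₁ + (γ - 1) * β₂ + γ * (1 - β₁ - β₂) by ring,
    rpow_add hr, rpow_add hr]
  ring

end RpowEstimates

lemma integral_div_rpow_sub_le {f : ℝ → ℝ} {r s M a b : ℝ} (hrs : r ≤ s) (hM : 0 ≤ M)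
    (hab : -1 < a - b) (hf : ∀ u ∈ Ioo r s, f u ≤ M * (u - r) ^ a) :
    ∫ u in r..s, f u / (u - r) ^ b ≤ M * (s - r) ^ (a - b + 1) / (a - b + 1) := by
  have hab' : 0 < a - b + 1 := by linarith
  have hg : IntervalIntegrable (fun u => M * (u - r) ^ (a - b)) volume r s := by
    have h := intervalIntegral.intervalIntegrable_rpow' hab (a := 0) (b := s - r)
    replace h := h.comp_sub_right r
    rw [zero_add, sub_add_cancel] at h
    exact h.const_mul M
  have hg_eq : ∫ u in r..s, M * (u - r) ^ (a - b) = M * (s - r) ^ (a - b + 1) / (a - b + 1) := by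
    rw [intervalIntegral.integral_const_mul, intervalIntegral.integral_comp_sub_right
      (fun t => t ^ (a - b)), sub_self, integral_rpow (Or.inl hab), zero_rpow hab'.ne']
    ring
  by_cases hI : IntervalIntegrable (fun u => f u / (u - r) ^ b) volume r s
  · refine le_of_le_of_eq (intervalIntegral.integral_mono_on_of_le_Ioo hrs hI hg fun u hu => ?_)
      hg_eq
    have hur : 0 < u - r := sub_pos.2 hu.1
    rw [rpow_sub hur, ← mul_div_assoc]
    exact div_le_div_of_nonneg_right (hf u hu) (rpow_nonneg hur.le b)
  · rw [intervalIntegral.integral_undef hI]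
    have := sub_nonneg.2 hrs
    positivity

lemma not_intervalIntegrable_div_rpow {f : ℝ → ℝ} {s c a b : ℝ} (hs : 0 < s) (hc : 0 < c)
    (hab : a - b ≤ -1) (hf : ∀ u ∈ Ioo 0 s, c * u ^ a ≤ f u) :
    ¬ IntervalIntegrable (fun u => f u / u ^ b) volume 0 s := by
  intro hI
  have hle : ∀ u ∈ Ioo 0 s, u ^ (a - b) ≤ c⁻¹ * (f u / u ^ b) := by
    intro u hu
    rw [rpow_sub hu.1, le_inv_mul_iff₀ hc, ← mul_div_assoc]
    exact div_le_div_of_nonneg_right (hf u hu) (rpow_nonneg hu.1.le b)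
  have hint : IntegrableOn (fun u => u ^ (a - b)) (Ioo 0 s) volume := by
    refine ((hI.1.mono_set Ioo_subset_Ioc_self).const_mul c⁻¹).mono
      ((continuousOn_id.rpow_const fun u hu => Or.inl hu.1.ne').aestronglyMeasurable
        measurableSet_Ioo) ?_
    filter_upwards [ae_restrict_mem measurableSet_Ioo] with u hu
    have h0 := rpow_nonneg hu.1.le (a - b)
    rw [norm_of_nonneg h0, norm_of_nonneg (h0.trans (hle u hu))]
    exact hle u hu
  have := (intervalIntegral.integrableOn_Ioo_rpow_iff hs).1 hint
  linarith

section HurstDeriv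

/-- The derivative of `v ↦ |v| ^ (2 * H)`, denoted `h'` in the statement. -/
noncomputable def hurstDeriv (H x : ℝ) : ℝ := 2 * H * Real.sign x * |x| ^ (2 * H - 1)

variable {H : ℝ}

lemma hurstDeriv_of_pos {x : ℝ} (hx : 0 < x) : hurstDeriv H x = 2 * H * x ^ (2 * H - 1) := by
  simp [hurstDeriv, sign_of_pos hx, abs_of_pos hx]

lemma hurstDeriv_zero : hurstDeriv H 0 = 0 := by
  simp [hurstDeriv]

lemma abs_hurstDeriv_second_diff_le (hH0 : 0 ≤ H) (hH : H ≤ 1 / 2) {β₁ β₂ r u Δ : ℝ}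
    (hβ₁ : 0 ≤ β₁) (hβ₂ : 0 ≤ β₂) (hβ : β₁ + β₂ ≤ 1) (hr : 0 < r) (hru : r ≤ u) (hΔ : Δ ≤ 0) :
    |hurstDeriv H (r - Δ) - hurstDeriv H (u - Δ) - hurstDeriv H r + hurstDeriv H u| ≤
      2 * H * (1 - 2 * H) ^ (β₁ + β₂) * r ^ (2 * H - 1 - β₁ - β₂) * (u - r) ^ β₁ * |Δ| ^ β₂ := by
  have hδ : 0 ≤ -Δ := neg_nonneg.2 hΔ
  have key := abs_rpow_second_diff_le (γ := 2 * H - 1) (by linarith) hβ₁ hβ₂ hβ hr hru hδ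
  rw [neg_sub] at key
  rw [sub_eq_add_neg r, sub_eq_add_neg u, abs_of_nonpos hΔ, hurstDeriv_of_pos (by linarith),
    hurstDeriv_of_pos (by linarith), hurstDeriv_of_pos hr, hurstDeriv_of_pos (by linarith),
    ← mul_sub, ← mul_sub, ← mul_add, abs_mul, abs_of_nonneg (by linarith)]
  exact (mul_le_mul_of_nonneg_left key (by linarith)).trans_eq (by ring)

lemma hurstDeriv_le_abs_second_diff_zero (hH0 : 0 ≤ H) (hH : H ≤ 1 / 2) {u Δ : ℝ} (hu : 0 < u)
    (hΔ : Δ < 0) :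
    2 * H * u ^ (2 * H - 1) ≤
      |hurstDeriv H (-Δ) - hurstDeriv H (u - Δ) - hurstDeriv H 0 + hurstDeriv H u| := by
  rw [hurstDeriv_zero, hurstDeriv_of_pos (by linarith), hurstDeriv_of_pos (by linarith),
    hurstDeriv_of_pos hu]
  have hmono : (u - Δ) ^ (2 * H - 1) ≤ (-Δ) ^ (2 * H - 1) :=
    rpow_le_rpow_of_nonpos (by linarith) (by linarith) (by linarith)
  have := mul_le_mul_of_nonneg_left hmono (by linarith : 0 ≤ 2 * H)
  exact le_trans (by linarith) (le_abs_self _)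

end HurstDeriv

theorem stmt19_general (H β₁ β₂ α' : ℝ) (hH0 : 0 < H) (hH : H < 1/2)
    (hβ₁0 : 0 < β₁) (hβ₂0 : 0 < β₂)
    (hββ : β₁ + β₂ < 2 * H) (hα'1 : α' < 1) (hαβ : 1 < α' + β₁) :
    ∃ C > 0, ∀ (r s Δ : ℝ), 0 ≤ r → r < s → Δ ≤ 0 →
      (let h' : ℝ → ℝ := fun x => 2 * H * Real.sign x * |x| ^ (2 * H - 1)
      (∫ u in r..s, |h' (r - Δ) - h' (u - Δ) - h' r + h' u| / (u - r) ^ (2 - α'))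
        ≤ C * r ^ (2 * H - 1 - β₁ - β₂) * (s - r) ^ (α' + β₁ - 1) * |Δ| ^ β₂) := by
  have h2H : 0 < 1 - 2 * H := by linarith
  refine ⟨2 * H * (1 - 2 * H) ^ (β₁ + β₂) / (α' + β₁ - 1), by positivity, ?_⟩
  intro r s Δ hr hrs hΔ
  show ∫ u in r..s, |hurstDeriv H (r - Δ) - hurstDeriv H (u - Δ) - hurstDeriv H r
    + hurstDeriv H u| / (u - r) ^ (2 - α') ≤ _
  rcases hr.eq_or_lt with rfl | hr
  · -- for `r = 0` the right-hand side is `0`; so is the integral: it diverges unless `Δ = 0`,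
    -- and a divergent integral has the junk value `0`
    rw [zero_rpow (by linarith : 2 * H - 1 - β₁ - β₂ ≠ 0)]
    rcases hΔ.eq_or_lt with rfl | hΔ
    · simp
    rw [intervalIntegral.integral_undef, mul_zero, zero_mul, zero_mul]
    simp only [zero_sub, sub_zero]
    exact not_intervalIntegrable_div_rpow hrs (by positivity) (by linarith)
      fun u hu => hurstDeriv_le_abs_second_diff_zero hH0.le hH.le hu.1 hΔ
  · refine (integral_div_rpow_sub_le hrs.le
      (M := 2 * H * (1 - 2 * H) ^ (β₁ + β₂) * r ^ (2 * H - 1 - β₁ - β₂) * |Δ| ^ β₂)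
      (by positivity) (by linarith : -1 < β₁ - (2 - α')) fun u hu =>
        (abs_hurstDeriv_second_diff_le hH0.le hH.le hβ₁0.le hβ₂0.le (by linarith) hr hu.1.le
          hΔ).trans_eq (by ring)).trans_eq ?_
    rw [show β₁ - (2 - α') + 1 = α' + β₁ - 1 by ring]
    ring

theorem stmt19 (H β₁ β₂ α' : ℝ) (hH0 : 0 < H) (hH : H < 1/2)
    (hβ₁0 : 0 < β₁) (hβ₁1 : β₁ < 1) (hβ₂0 : 0 < β₂) (hβ₂1 : β₂ < 1)
    (hββ : β₁ + β₂ < 2 * H) (hα'0 : 0 < α') (hα'1 : α' < 1) (hαβ : 1 < α' + β₁) :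
    ∃ C > 0, ∀ (r s Δ : ℝ), 0 ≤ r → r < s → Δ ≤ 0 →
      (let h' : ℝ → ℝ := fun x => 2 * H * Real.sign x * |x| ^ (2 * H - 1)
      (∫ u in r..s, |h' (r - Δ) - h' (u - Δ) - h' r + h' u| / (u - r) ^ (2 - α'))
        ≤ C * r ^ (2 * H - 1 - β₁ - β₂) * (s - r) ^ (α' + β₁ - 1) * |Δ| ^ β₂) :=
  stmt19_general H β₁ β₂ α' hH0 hH hβ₁0 hβ₂0 hββ hα'1 hαβ
end
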